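/- arXiv:2102.05406 — 7 statements merged into one kernel-verified Lean document; each statement's English description precedes it below -/
import Mathlib

section
/- Let p ∈ [1/2, 1) and c1, c2, c3 > 0, and set C(t) := min{c1·t^p + c2, c3·t} and ρ(t) := C(t)/t for t ≥ 1. Then for every function Δ : ℕ → ℝ with Δ(τ) ≥ 0 for all τ, and every interval J = [s,e] of positive integers, there exists a partition of J into consecutive intervals I_1, …, I_ℓ such that Δ_{I_i} ≤ ρ(|I_i|) for every i, and ℓ ≤ 1 + 2·(c1^{-1}·Δ_J·|J|^{1-p})^{1/(2-p)} + c3^{-1}·Δ_J. -/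
/-!
Cut `[s, e]` greedily, each block reaching as far right as it can while staying good
(`Δ_I ≤ ρ(|I|)`). Every block but the last then turns bad when one more point is added: if `m` is the length of the extended block and `v`
its `Δ`-mass, `v > ρ(m) ≥ min (c1 m^(p-1)) c3`. At most `Δ_J / c3` blocks have `v > c3`; each
of the others has `c1 ≤ v m^(1-p)`, and Hölder's inequality with exponents `1` and `1/(1-p)`
bounds their number by `(c1⁻¹ (∑ v) (∑ m)^(1-p))^(1/(2-p))`. Finally `∑ v ≤ Δ_J`, and
`∑ m ≤ 2|J|` since an extended block is at most twice as long as the block itself.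
-/

open Finset

/-- The blocks are the closed intervals `[st i, en i]`, `i < ℓ`. -/
structure IsIntervalPartition (s e ℓ : ℕ) (st en : ℕ → ℕ) : Prop where
  one_le : 1 ≤ ℓ
  st_zero : st 0 = s
  en_last : en (ℓ - 1) = e
  st_le_en : ∀ i < ℓ, st i ≤ en i
  st_succ : ∀ i, i + 1 < ℓ → st (i + 1) = en i + 1

namespace IsIntervalPartition

variable {s e ℓ : ℕ} {st en : ℕ → ℕ}

theorem singleton (hse : s ≤ e) : IsIntervalPartition s e 1 (fun _ => s) (fun _ => e) :=
  ⟨le_rfl, rfl, rfl, fun _ _ => hse, fun _ h => by omega⟩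

theorem cons {a b : ℕ} (h : IsIntervalPartition (b + 1) e ℓ st en) (hab : a ≤ b) :
    IsIntervalPartition a e (ℓ + 1) (fun | 0 => a | i + 1 => st i)
      (fun | 0 => b | i + 1 => en i) where
  one_le := by omega
  st_zero := rfl
  en_last := by
    obtain ⟨k, rfl⟩ : ∃ k, ℓ = k + 1 := ⟨ℓ - 1, by have := h.one_le; omega⟩
    exact h.en_last
  st_le_en
    | 0, _ => hab
    | i + 1, hi => h.st_le_en i (by omega)
  st_succ
    | 0, _ => h.st_zero
    | i + 1, hi => h.st_succ i (by omega)

theorem le_st (h : IsIntervalPartition s e ℓ st en) : ∀ i < ℓ, s ≤ st i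
  | 0, _ => h.st_zero.ge
  | i + 1, hi => by
    have := h.le_st i (by omega)
    have := h.st_le_en i (by omega)
    have := h.st_succ i hi
    omega

theorem st_le (h : IsIntervalPartition s e ℓ st en) : st (ℓ - 1) ≤ e :=
  h.en_last ▸ h.st_le_en _ (by have := h.one_le; omega)

theorem sum_sum_Ico_succ {M : Type*} [AddCommMonoid M] (h : IsIntervalPartition s e ℓ st en)
    (f : ℕ → M) :
    ∀ j < ℓ, ∑ i ∈ range j, ∑ τ ∈ Ico (st i) (en i + 1), f τ = ∑ τ ∈ Ico s (st j), f τ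
  | 0, _ => by simp [h.st_zero]
  | j + 1, hj => by
    rw [sum_range_succ, h.sum_sum_Ico_succ f j (by omega), ← h.st_succ j hj]
    exact sum_Ico_consecutive f (h.le_st j (by omega))
      (by have := h.st_le_en j (by omega); have := h.st_succ j hj; omega)

theorem sum_sum_Ico_succ_le {f : ℕ → ℝ} (h : IsIntervalPartition s e ℓ st en)
    (hf : ∀ τ, 0 ≤ f τ) :
    ∑ i ∈ range (ℓ - 1), ∑ τ ∈ Ico (st i) (en i + 1), f τ ≤ ∑ τ ∈ Ico s e, f τ := by
  rw [h.sum_sum_Ico_succ f _ (by have := h.one_le; omega)]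
  exact sum_le_sum_of_subset_of_nonneg (Ico_subset_Ico le_rfl h.st_le) fun τ _ _ => hf τ

theorem sum_length_succ_le (h : IsIntervalPartition s e ℓ st en) :
    ∑ i ∈ range (ℓ - 1), (en i + 1 - st i + 1) ≤ 2 * (e - s + 1) := by
  have hcard := h.sum_sum_Ico_succ (fun _ => 1) (ℓ - 1) (by have := h.one_le; omega)
  simp only [sum_const, Nat.card_Ico, smul_eq_mul, mul_one] at hcard
  calc ∑ i ∈ range (ℓ - 1), (en i + 1 - st i + 1)
      ≤ ∑ i ∈ range (ℓ - 1), 2 * (en i + 1 - st i) :=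
        sum_le_sum fun i hi => by
          have := h.st_le_en i (by have := mem_range.1 hi; omega)
          omega
    _ ≤ 2 * (e - s + 1) := by
        rw [← mul_sum, hcard]
        have := h.st_le
        omega

end IsIntervalPartition

theorem exists_isIntervalPartition_maximal (P : ℕ → ℕ → Prop) (hP : ∀ a, P a a) {s e : ℕ}
    (hse : s ≤ e) :
    ∃ ℓ st en, IsIntervalPartition s e ℓ st en ∧ (∀ i < ℓ, P (st i) (en i)) ∧
      ∀ i, i + 1 < ℓ → ¬ P (st i) (en i + 1) := by
  classical
  induction hd : e - s using Nat.strong_induction_on generalizing s with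
  | _ d ih =>
  let Q b := s ≤ b ∧ P s b
  set b := Nat.findGreatest Q e
  obtain ⟨hsb, hPb⟩ : Q b := Nat.findGreatest_spec (P := Q) hse ⟨le_rfl, hP s⟩
  rcases (Nat.findGreatest_le e : b ≤ e).eq_or_lt with hbe | hbe
  · exact ⟨1, _, _, .singleton hse, fun _ _ => hbe ▸ hPb, fun _ _ => by omega⟩
  · have hmax : ¬ P s (b + 1) := fun h =>
      Nat.findGreatest_is_greatest (Nat.lt_succ_self b) hbe ⟨by omega, h⟩
    obtain ⟨ℓ, st, en, hpart, hgood, hmaxl⟩ := ih (e - (b + 1)) (by omega) hbe rfl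
    refine ⟨ℓ + 1, _, _, hpart.cons hsb, ?_, ?_⟩
    · rintro (_ | i) hi
      exacts [hPb, hgood i (by omega)]
    · rintro (_ | i) hi
      exacts [hmax, hmaxl i (by omega)]

theorem min_mul_rpow_sub_one_le {p c₁ c₂ c₃ m : ℝ} (hc₂ : 0 ≤ c₂) (hm : 0 < m) :
    min (c₁ * m ^ (p - 1)) c₃ ≤ min (c₁ * m ^ p + c₂) (c₃ * m) / m := by
  rw [← min_div_div_right hm.le, mul_div_cancel_right₀ _ hm.ne', Real.rpow_sub_one hm.ne',
    ← mul_div_assoc]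
  gcongr
  exact le_add_of_nonneg_right hc₂

theorem card_le_rpow_of_le_mul_rpow {ι : Type*} (t : Finset ι) {v m : ι → ℝ} {c p : ℝ}
    (hp : p < 1) (hc : 0 < c) (hv : ∀ i ∈ t, 0 ≤ v i) (hm : ∀ i ∈ t, 0 ≤ m i)
    (h : ∀ i ∈ t, c ≤ v i * m i ^ (1 - p)) :
    (#t : ℝ) ≤ (c⁻¹ * (∑ i ∈ t, v i) * (∑ i ∈ t, m i) ^ (1 - p)) ^ (1 / (2 - p)) := by
  set q := 1 / (2 - p) with hq_def
  have hq : 0 < q := one_div_pos.2 (by linarith)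
  have hV : 0 ≤ ∑ i ∈ t, v i := sum_nonneg hv
  have hM : 0 ≤ ∑ i ∈ t, m i := sum_nonneg hm
  -- Hölder with exponents `1` and `1 / (1 - p)`, whose harmonic sum is `1 / (2 - p)`.
  have hpqr : Real.HolderTriple 1 (1 - p)⁻¹ q :=
    ⟨by rw [inv_one, inv_inv, hq_def, one_div, inv_inv]; ring, one_pos, by simp; linarith⟩
  have hHolder := Real.Lr_rpow_le_Lp_mul_Lq_of_nonneg t hpqr hv
    (g := fun i => m i ^ (1 - p)) fun i hi => Real.rpow_nonneg (hm i hi) _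
  have hmm : ∀ i ∈ t, (m i ^ (1 - p)) ^ (1 - p)⁻¹ = m i := fun i hi => by
    rw [← Real.rpow_mul (hm i hi), mul_inv_cancel₀ (by linarith), Real.rpow_one]
  simp only [Real.rpow_one, div_one, sum_congr rfl hmm, div_inv_eq_mul, mul_comm q,
    Real.rpow_mul hM] at hHolder
  have hcard : (#t : ℝ) * c ^ q ≤ ((∑ i ∈ t, v i) * (∑ i ∈ t, m i) ^ (1 - p)) ^ q := by
    rw [Real.mul_rpow hV (Real.rpow_nonneg hM _)]
    refine le_trans ?_ hHolder
    rw [← nsmul_eq_mul]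
    exact card_nsmul_le_sum _ _ _ fun i hi => Real.rpow_le_rpow hc.le (h i hi) hq.le
  have hcq : 0 < c ^ q := Real.rpow_pos_of_pos hc q
  rw [mul_assoc, Real.mul_rpow (inv_nonneg.2 hc.le) (by positivity), Real.inv_rpow hc.le,
    inv_mul_eq_div, le_div_iff₀ hcq]
  exact hcard

theorem card_le_of_min_mul_rpow_lt {ι : Type*} (t : Finset ι) {v m : ι → ℝ} {p c₁ c₃ D N : ℝ}
    (hp : p < 1) (hc₁ : 0 < c₁) (hc₃ : 0 < c₃) (hv : ∀ i ∈ t, 0 ≤ v i) (hm : ∀ i ∈ t, 0 < m i)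
    (hlt : ∀ i ∈ t, min (c₁ * m i ^ (p - 1)) c₃ < v i)
    (hD : ∑ i ∈ t, v i ≤ D) (hN : ∑ i ∈ t, m i ≤ N) :
    (#t : ℝ) ≤ (c₁⁻¹ * D * N ^ (1 - p)) ^ (1 / (2 - p)) + c₃⁻¹ * D := by
  set A := t.filter fun i => c₃ ≤ c₁ * m i ^ (p - 1)
  set B := t.filter fun i => ¬ c₃ ≤ c₁ * m i ^ (p - 1)
  have hsumD : ∀ u ⊆ t, ∑ i ∈ u, v i ≤ D := fun u hu =>
    (sum_le_sum_of_subset_of_nonneg hu fun i hi _ => hv i hi).trans hD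
  have hA : (#A : ℝ) ≤ c₃⁻¹ * D := by
    rw [inv_mul_eq_div, le_div_iff₀ hc₃, ← nsmul_eq_mul]
    refine (card_nsmul_le_sum _ _ _ fun i hi => ?_).trans (hsumD A (filter_subset _ _))
    obtain ⟨hi, hc⟩ := mem_filter.1 hi
    exact (min_eq_right hc ▸ hlt i hi).le
  have hB : (#B : ℝ) ≤ (c₁⁻¹ * D * N ^ (1 - p)) ^ (1 / (2 - p)) := by
    have hBt : B ⊆ t := filter_subset _ _
    refine (card_le_rpow_of_le_mul_rpow B hp hc₁ (fun i hi => hv i (hBt hi))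
      (fun i hi => (hm i (hBt hi)).le) fun i hi => ?_).trans ?_
    · obtain ⟨hi, hc⟩ := mem_filter.1 hi
      have := min_eq_left (not_le.1 hc).le ▸ hlt i hi
      calc c₁ = c₁ * m i ^ (p - 1) * m i ^ (1 - p) := by
            rw [mul_assoc, ← Real.rpow_add (hm i hi)]; simp
        _ ≤ v i * m i ^ (1 - p) :=
            mul_le_mul_of_nonneg_right this.le (Real.rpow_nonneg (hm i hi).le _)
    · have hV : 0 ≤ ∑ i ∈ B, v i := sum_nonneg fun i hi => hv i (hBt hi)
      have hM : 0 ≤ ∑ i ∈ B, m i := sum_nonneg fun i hi => (hm i (hBt hi)).le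
      have hBD := hsumD B hBt
      have hBN : ∑ i ∈ B, m i ≤ N :=
        (sum_le_sum_of_subset_of_nonneg hBt fun i hi _ => (hm i hi).le).trans hN
      refine Real.rpow_le_rpow (by positivity) ?_ (one_div_pos.2 (by linarith)).le
      exact mul_le_mul (by gcongr) (Real.rpow_le_rpow hM hBN (by linarith)) (by positivity)
        (mul_nonneg (inv_nonneg.2 hc₁.le) (hV.trans hBD))
  have hAB : #A + #B = #t := card_filter_add_card_filter_not _
  rw [← hAB, Nat.cast_add]
  linarith

theorem rpow_mul_two_mul_rpow_le {p x n : ℝ} (hp : p < 1) (hx : 0 ≤ x) (hn : 0 ≤ n) :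
    (x * (2 * n) ^ (1 - p)) ^ (1 / (2 - p)) ≤ 2 * (x * n ^ (1 - p)) ^ (1 / (2 - p)) :=
  calc (x * (2 * n) ^ (1 - p)) ^ (1 / (2 - p))
      ≤ ((2 : ℝ) ^ (2 - p) * (x * n ^ (1 - p))) ^ (1 / (2 - p)) := by
        rw [Real.mul_rpow zero_le_two hn, mul_left_comm]
        gcongr
        · exact (one_div_pos.2 (by linarith)).le
        all_goals norm_num
    _ = 2 * (x * n ^ (1 - p)) ^ (1 / (2 - p)) := by
        rw [Real.mul_rpow (by positivity) (by positivity), ← Real.rpow_mul zero_le_two,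
          mul_one_div_cancel (by linarith), Real.rpow_one]

theorem stmt_1_general (p c1 c2 c3 : ℝ) (hp : 1 / 2 ≤ p ∧ p < 1)
    (hc1 : 0 < c1) (hc2 : 0 < c2) (hc3 : 0 < c3)
    (Δ : ℕ → ℝ) (hΔ : ∀ τ, 0 ≤ Δ τ) (s e : ℕ) (hse : s ≤ e) :
    ∃ (ℓ : ℕ) (st en : ℕ → ℕ), 1 ≤ ℓ ∧
      st 0 = s ∧ en (ℓ - 1) = e ∧
      (∀ i < ℓ, st i ≤ en i) ∧
      (∀ i, i + 1 < ℓ → st (i + 1) = en i + 1) ∧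
      (∀ i < ℓ, ∑ τ ∈ Finset.Ico (st i) (en i), Δ τ ≤
        (min (c1 * ((en i - st i + 1 : ℕ) : ℝ) ^ p + c2) (c3 * ((en i - st i + 1 : ℕ) : ℝ))) /
          ((en i - st i + 1 : ℕ) : ℝ)) ∧
      (ℓ : ℝ) ≤ 1 +
        2 * (c1⁻¹ * (∑ τ ∈ Finset.Ico s e, Δ τ) * ((e - s + 1 : ℕ) : ℝ) ^ (1 - p)) ^ (1 / (2 - p))
        + c3⁻¹ * (∑ τ ∈ Finset.Ico s e, Δ τ) := by
  obtain ⟨ℓ, st, en, hpart, hgood, hmax⟩ := exists_isIntervalPartition_maximal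
    (fun a b => ∑ τ ∈ Ico a b, Δ τ ≤ min (c1 * ((b - a + 1 : ℕ) : ℝ) ^ p + c2)
      (c3 * ((b - a + 1 : ℕ) : ℝ)) / ((b - a + 1 : ℕ) : ℝ))
    (fun a => by simp only [Ico_self, sum_empty, Nat.sub_self]; positivity) hse
  refine ⟨ℓ, st, en, hpart.one_le, hpart.st_zero, hpart.en_last, hpart.st_le_en, hpart.st_succ,
    hgood, ?_⟩
  have hcount := card_le_of_min_mul_rpow_lt (range (ℓ - 1)) hp.2 hc1 hc3
    (v := fun i => ∑ τ ∈ Ico (st i) (en i + 1), Δ τ)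
    (m := fun i => ((en i + 1 - st i + 1 : ℕ) : ℝ))
    (fun i _ => sum_nonneg fun τ _ => hΔ τ) (fun i _ => by positivity)
    (fun i hi => (min_mul_rpow_sub_one_le hc2.le (by positivity)).trans_lt
      (not_le.1 (hmax i (by have := mem_range.1 hi; omega))))
    (hpart.sum_sum_Ico_succ_le hΔ) (N := 2 * ((e - s + 1 : ℕ) : ℝ))
    (by exact_mod_cast hpart.sum_length_succ_le)
  have htwo := rpow_mul_two_mul_rpow_le hp.2
    (mul_nonneg (inv_nonneg.2 hc1.le) (sum_nonneg fun τ _ => hΔ τ : 0 ≤ ∑ τ ∈ Ico s e, Δ τ))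
    (Nat.cast_nonneg (e - s + 1))
  have hℓ : (ℓ : ℝ) = 1 + (#(range (ℓ - 1)) : ℝ) := by
    rw [card_range, Nat.cast_sub hpart.one_le]; ring
  linarith

/-- With `C(t) = min (c1 t^p + c2) (c3 t)` and `ρ(t) = C(t)/t`,
for every nonnegative `Δ : ℕ → ℝ` and every interval `J = [s,e]` of positive integers,
there is a partition of `J` into consecutive intervals `I_1, …, I_ℓ` with
`Δ_{I_i} ≤ ρ(|I_i|)` for each `i` and
`ℓ ≤ 1 + 2 (c1⁻¹ Δ_J |J|^{1-p})^{1/(2-p)} + c3⁻¹ Δ_J`. -/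
theorem stmt_1 (p c1 c2 c3 : ℝ) (hp : 1 / 2 ≤ p ∧ p < 1)
    (hc1 : 0 < c1) (hc2 : 0 < c2) (hc3 : 0 < c3)
    (Δ : ℕ → ℝ) (hΔ : ∀ τ, 0 ≤ Δ τ) (s e : ℕ) (hs : 1 ≤ s) (hse : s ≤ e) :
    ∃ (ℓ : ℕ) (st en : ℕ → ℕ), 1 ≤ ℓ ∧
      st 0 = s ∧ en (ℓ - 1) = e ∧
      (∀ i < ℓ, st i ≤ en i) ∧
      (∀ i, i + 1 < ℓ → st (i + 1) = en i + 1) ∧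
      (∀ i < ℓ, ∑ τ ∈ Finset.Ico (st i) (en i), Δ τ ≤
        (min (c1 * ((en i - st i + 1 : ℕ) : ℝ) ^ p + c2) (c3 * ((en i - st i + 1 : ℕ) : ℝ))) /
          ((en i - st i + 1 : ℕ) : ℝ)) ∧
      (ℓ : ℝ) ≤ 1 +
        2 * (c1⁻¹ * (∑ τ ∈ Finset.Ico s e, Δ τ) * ((e - s + 1 : ℕ) : ℝ) ^ (1 - p)) ^ (1 / (2 - p))
        + c3⁻¹ * (∑ τ ∈ Finset.Ico s e, Δ τ) :=
  stmt_1_general p c1 c2 c3 hp hc1 hc2 hc3 Δ hΔ s e hse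
end

section
/- There exists a universal constant K > 0 such that for all p ∈ [1/2, 1), all c1, c2, c3 > 0, and all integers 0 ≤ m ≤ n, setting C(t) := min{c1·t^p + c2, c3·t} and ρ(t) := C(t)/t, one has (ρ(2^m)/ρ(2^n))·C(2^m) ≤ K·( c1·2^{np} + (c2·c3/c1)·2^{n(1-p)} + (c1²/c3)·2^{m(2p-1)} + (c2²/c3)·2^{-m} ). -/
/-!
Write `A = C(s)`, `B = C(t)` for `s ≤ t`; the left-hand side is `A² t / (s B)`, so it suffices to
bound `A² t` by `4 R s X` for both candidates `X` of the minimum `B`, where `R` is the bracket on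
the right. If `X = c3 t`, use `A ≤ c1 s^p + c2` and `(x + y)² ≤ 2x² + 2y²`. If `X = c1 t^p + c2`,
either `c2 ≤ c1 s^p`, so `A ≤ 2 c1 s^p` and `s^{2p-1} ≤ t^{2p-1}` (this is where `p ≥ 1/2`
enters), or `c1 s^p ≤ c2`, so `A ≤ 2 c2` and `A ≤ c3 s`.
-/

open Real

lemma Real.rpow_two_mul_sub_one_mul_self {s : ℝ} (hs : 0 < s) (p : ℝ) :
    s ^ (2 * p - 1) * s = s ^ p * s ^ p := by
  rw [show 2 * p - 1 = p + p - 1 by ring, rpow_sub_one hs.ne', rpow_add hs]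
  field_simp

noncomputable def minPowLinear (p c1 c2 c3 t : ℝ) : ℝ := min (c1 * t ^ p + c2) (c3 * t)

namespace minPowLinear

variable {p c1 c2 c3 s t : ℝ}

lemma pos (hc1 : 0 < c1) (hc2 : 0 < c2) (hc3 : 0 < c3) (ht : 0 < t) :
    0 < minPowLinear p c1 c2 c3 t :=
  lt_min (by positivity) (by positivity)

lemma sq_mul_le_of_linear (hc1 : 0 < c1) (hc2 : 0 < c2) (hc3 : 0 < c3) (hs : 0 < s)
    (ht : 0 < t) :
    minPowLinear p c1 c2 c3 s ^ 2 * t ≤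
      4 * (c1 ^ 2 / c3 * s ^ (2 * p - 1) + c2 ^ 2 / c3 * s⁻¹) * s * (c3 * t) := by
  have hA : minPowLinear p c1 c2 c3 s ^ 2 ≤ (c1 * s ^ p + c2) ^ 2 :=
    pow_le_pow_left₀ (pos hc1 hc2 hc3 hs).le (min_le_left _ _) 2
  have hrhs : 4 * (c1 ^ 2 / c3 * s ^ (2 * p - 1) + c2 ^ 2 / c3 * s⁻¹) * s * (c3 * t) =
      4 * ((c1 * s ^ p) ^ 2 + c2 ^ 2) * t := by
    field_simp
    linear_combination c1 ^ 2 * rpow_two_mul_sub_one_mul_self hs p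
  rw [hrhs]
  gcongr
  nlinarith [sq_nonneg (c1 * s ^ p - c2)]

lemma sq_mul_le_of_power (hp : 1 / 2 ≤ p) (hc1 : 0 < c1) (hc2 : 0 < c2) (hc3 : 0 < c3)
    (hs : 0 < s) (hst : s ≤ t) :
    minPowLinear p c1 c2 c3 s ^ 2 * t ≤
      4 * (c1 * t ^ p + c2 * c3 / c1 * t ^ (1 - p)) * s * (c1 * t ^ p + c2) := by
  have ht : 0 < t := hs.trans_le hst
  have hA0 := (pos (p := p) hc1 hc2 hc3 hs).le
  rcases le_total c2 (c1 * s ^ p) with hsmall | hlarge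
  · have hA : minPowLinear p c1 c2 c3 s ≤ 2 * (c1 * s ^ p) :=
      (min_le_left _ _).trans (by linarith)
    calc minPowLinear p c1 c2 c3 s ^ 2 * t
        ≤ (2 * (c1 * s ^ p)) ^ 2 * t := by gcongr
      _ = 4 * c1 ^ 2 * (s ^ (2 * p - 1) * s) * t := by
          rw [rpow_two_mul_sub_one_mul_self hs]; ring
      _ ≤ 4 * c1 ^ 2 * (t ^ (2 * p - 1) * s) * t := by
          gcongr
          linarith
      _ = 4 * (c1 * t ^ p) * s * (c1 * t ^ p) := by
          linear_combination (4 * c1 ^ 2 * s) * rpow_two_mul_sub_one_mul_self ht p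
      _ ≤ 4 * (c1 * t ^ p + c2 * c3 / c1 * t ^ (1 - p)) * s * (c1 * t ^ p + c2) := by
          gcongr <;> linarith [show 0 < c2 * c3 / c1 * t ^ (1 - p) by positivity]
  · have hA : minPowLinear p c1 c2 c3 s ≤ 2 * c2 := (min_le_left _ _).trans (by linarith)
    have hA' : minPowLinear p c1 c2 c3 s ≤ c3 * s := min_le_right _ _
    have ht_split : t ^ (1 - p) * t ^ p = t := by
      rw [← rpow_add ht, sub_add_cancel, rpow_one]
    calc minPowLinear p c1 c2 c3 s ^ 2 * t
        ≤ (2 * c2) * (c3 * s) * t := by rw [sq]; gcongr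
      _ ≤ 4 * (c2 * c3 * s * t) := by nlinarith [show 0 < c2 * c3 * s * t by positivity]
      _ = 4 * (c2 * c3 / c1 * t ^ (1 - p)) * s * (c1 * t ^ p) := by
          field_simp
          exact ht_split.symm
      _ ≤ 4 * (c1 * t ^ p + c2 * c3 / c1 * t ^ (1 - p)) * s * (c1 * t ^ p + c2) := by
          gcongr <;> linarith [show 0 < c1 * t ^ p by positivity]

lemma ratio_mul_le (hp : 1 / 2 ≤ p) (hc1 : 0 < c1) (hc2 : 0 < c2) (hc3 : 0 < c3)
    (hs : 0 < s) (hst : s ≤ t) :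
    (minPowLinear p c1 c2 c3 s / s) / (minPowLinear p c1 c2 c3 t / t) *
        minPowLinear p c1 c2 c3 s ≤
      4 * (c1 * t ^ p + c2 * c3 / c1 * t ^ (1 - p) + c1 ^ 2 / c3 * s ^ (2 * p - 1)
        + c2 ^ 2 / c3 * s⁻¹) := by
  have ht : 0 < t := hs.trans_le hst
  have hA := pos (p := p) hc1 hc2 hc3 hs
  have hB := pos (p := p) hc1 hc2 hc3 ht
  set A := minPowLinear p c1 c2 c3 s
  set R₁ := c1 * t ^ p + c2 * c3 / c1 * t ^ (1 - p)
  set R₂ := c1 ^ 2 / c3 * s ^ (2 * p - 1) + c2 ^ 2 / c3 * s⁻¹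
  have hR₁ : 0 ≤ R₁ := by positivity
  have hR₂ : 0 ≤ R₂ := by positivity
  rw [show A / s / (minPowLinear p c1 c2 c3 t / t) * A =
      A ^ 2 * t / (s * minPowLinear p c1 c2 c3 t) by field_simp, div_le_iff₀ (by positivity),
    add_assoc R₁]
  calc A ^ 2 * t
      ≤ min (4 * (R₁ + R₂) * s * (c1 * t ^ p + c2)) (4 * (R₁ + R₂) * s * (c3 * t)) := by
        refine le_min ((sq_mul_le_of_power hp hc1 hc2 hc3 hs hst).trans ?_)
          ((sq_mul_le_of_linear hc1 hc2 hc3 hs ht).trans ?_) <;>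
        gcongr 4 * ?_ * _ * _ <;> linarith
    _ = 4 * (R₁ + R₂) * (s * minPowLinear p c1 c2 c3 t) := by
        rw [← mul_min_of_nonneg _ _ (by positivity), minPowLinear, mul_assoc]

end minPowLinear

/-- There is a universal constant `K > 0` such that, with
`C(t) = min (c1 t^p + c2) (c3 t)` and `ρ(t) = C(t)/t`, for all `0 ≤ m ≤ n`,
`(ρ(2^m)/ρ(2^n)) C(2^m) ≤ K (c1 2^{np} + (c2 c3/c1) 2^{n(1-p)}
  + (c1²/c3) 2^{m(2p-1)} + (c2²/c3) 2^{-m})`. -/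
theorem stmt_3 : ∃ K : ℝ, 0 < K ∧
    ∀ (p c1 c2 c3 : ℝ), 1 / 2 ≤ p → p < 1 → 0 < c1 → 0 < c2 → 0 < c3 →
    ∀ m n : ℕ, m ≤ n →
      ((min (c1 * ((2 : ℝ) ^ m) ^ p + c2) (c3 * (2 : ℝ) ^ m) / (2 : ℝ) ^ m) /
        (min (c1 * ((2 : ℝ) ^ n) ^ p + c2) (c3 * (2 : ℝ) ^ n) / (2 : ℝ) ^ n)) *
        min (c1 * ((2 : ℝ) ^ m) ^ p + c2) (c3 * (2 : ℝ) ^ m) ≤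
      K * (c1 * (2 : ℝ) ^ ((n : ℝ) * p) + (c2 * c3 / c1) * (2 : ℝ) ^ ((n : ℝ) * (1 - p))
        + (c1 ^ 2 / c3) * (2 : ℝ) ^ ((m : ℝ) * (2 * p - 1))
        + (c2 ^ 2 / c3) * (2 : ℝ) ^ (-(m : ℝ))) := by
  refine ⟨4, by norm_num, fun p c1 c2 c3 hp _ hc1 hc2 hc3 m n hmn => ?_⟩
  simp only [rpow_natCast_mul zero_le_two, rpow_neg zero_le_two, rpow_natCast]
  exact minPowLinear.ratio_mul_le hp hc1 hc2 hc3 (by positivity)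
    (pow_le_pow_right₀ one_le_two hmn)
end

section
/- Let p ∈ [1/2, 1) and c1, c2, c3 > 0, and set C(t) := min{c1·t^p + c2, c3·t} and ρ(t) := C(t)/t. Let Δ : ℕ → ℝ with Δ(τ) ≥ 0 for all τ, let T ≥ 1 be an integer, and suppose [1,T] is partitioned into consecutive intervals E_1, …, E_N such that Δ_{E_i} > ρ(|E_i|) for every i ∈ {1,…,N-1}. Then N ≤ L_{[1,T]} and N ≤ 1 + 2·(c1^{-1}·Δ_{[1,T]}·T^{1-p})^{1/(2-p)} + c3^{-1}·Δ_{[1,T]}. -/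
/-!
Since `ρ(t) ≥ min (c1 t^(p-1)) c3`, every non-final interval carries positive mass, hence a
nonzero `Δ`, and either has mass above `c3` or mass above `c1 |E|^(p-1)`. The intervals are
disjoint inside `[1, T]`, so there are at most `Δ_{[1,T]} / c3` of the first kind; for the `k`
intervals of the second kind, Hölder's inequality gives
`k^(2-p) ≤ (∑ |E|^(p-1)) (∑ |E|)^(1-p) ≤ c1⁻¹ Δ_{[1,T]} T^(1-p)`.
-/

open Finset

theorem sum_range_sum_Ico_consecutive {M : Type*} [AddCommMonoid M] (f : ℕ → M) {a : ℕ → ℕ}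
    {n : ℕ} (ha : ∀ i < n, a i ≤ a (i + 1)) :
    ∑ i ∈ range n, ∑ τ ∈ Ico (a i) (a (i + 1)), f τ = ∑ τ ∈ Ico (a 0) (a n), f τ := by
  induction n with
  | zero => simp
  | succ n ih =>
    have h0n : a 0 ≤ a n := by
      clear ih
      induction n with
      | zero => rfl
      | succ m ihm => exact (ihm fun i hi => ha i (by omega)).trans (ha m (by omega))
    rw [sum_range_succ, ih fun i hi => ha i (by omega),
      sum_Ico_consecutive _ h0n (ha n n.lt_succ_self)]

section Partition

variable {st en : ℕ → ℕ} {n T : ℕ}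

theorem sum_range_sum_Ico_succ_le_sum_Ico {M : Type*} [AddCommMonoid M] [PartialOrder M]
    [IsOrderedAddMonoid M] (h0 : st 0 = 1) (hT : st n ≤ T)
    (hle : ∀ i < n, st i ≤ en i) (hcons : ∀ i < n, st (i + 1) = en i + 1)
    (f : ℕ → M) (hf : ∀ τ, 0 ≤ f τ) :
    ∑ i ∈ range n, ∑ τ ∈ Ico (st i) (en i + 1), f τ ≤ ∑ τ ∈ Ico 1 T, f τ := by
  have hmono : ∀ i < n, st i ≤ st (i + 1) := fun i hi => by
    have := hle i hi; have := hcons i hi; omega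
  rw [sum_congr rfl fun i hi => by rw [← hcons i (mem_range.1 hi)],
    sum_range_sum_Ico_consecutive f hmono, h0]
  exact sum_le_sum_of_subset_of_nonneg (Ico_subset_Ico_right hT) fun τ _ _ => hf τ

theorem sum_range_sum_Ico_le_sum_Ico {M : Type*} [AddCommMonoid M] [PartialOrder M]
    [IsOrderedAddMonoid M] (h0 : st 0 = 1) (hT : st n ≤ T)
    (hle : ∀ i < n, st i ≤ en i) (hcons : ∀ i < n, st (i + 1) = en i + 1)
    (f : ℕ → M) (hf : ∀ τ, 0 ≤ f τ) :
    ∑ i ∈ range n, ∑ τ ∈ Ico (st i) (en i), f τ ≤ ∑ τ ∈ Ico 1 T, f τ :=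
  (sum_le_sum fun _ _ => sum_le_sum_of_subset_of_nonneg (Ico_subset_Ico_right (by omega))
    fun τ _ _ => hf τ).trans (sum_range_sum_Ico_succ_le_sum_Ico h0 hT hle hcons f hf)

theorem sum_range_tsub_add_one_le (h0 : st 0 = 1) (hT : st n ≤ T)
    (hle : ∀ i < n, st i ≤ en i) (hcons : ∀ i < n, st (i + 1) = en i + 1) :
    ∑ i ∈ range n, (en i - st i + 1) ≤ T := by
  have h := sum_range_sum_Ico_succ_le_sum_Ico h0 hT hle hcons (fun _ => 1) fun _ => zero_le_one
  simp only [sum_const, smul_eq_mul, mul_one, Nat.card_Ico] at h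
  refine le_trans (le_of_eq (sum_congr rfl fun i hi => ?_)) (h.trans (by omega))
  have := hle i (mem_range.1 hi)
  omega

theorem le_card_filter_ne_zero {M : Type*} [Zero M] [DecidableEq M] (h0 : st 0 = 1)
    (hT : st n ≤ T) (hle : ∀ i < n, st i ≤ en i) (hcons : ∀ i < n, st (i + 1) = en i + 1)
    (f : ℕ → M) (hf : ∀ i < n, ∃ τ ∈ Ico (st i) (en i), f τ ≠ 0) :
    n ≤ #{τ ∈ Ico 1 T | f τ ≠ 0} := by
  have h := sum_range_sum_Ico_le_sum_Ico h0 hT hle hcons (fun τ => if f τ ≠ 0 then 1 else 0)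
    fun _ => Nat.zero_le _
  simp only [← card_filter] at h
  calc n = ∑ i ∈ range n, 1 := by simp
    _ ≤ _ := sum_le_sum fun i hi => card_pos.2 ?_
    _ ≤ _ := h
  obtain ⟨τ, hτ, hfτ⟩ := hf i (mem_range.1 hi)
  exact ⟨τ, mem_filter.2 ⟨hτ, hfτ⟩⟩

end Partition

theorem min_mul_rpow_sub_one_le_s4 {p c1 c2 c3 t : ℝ} (hc2 : 0 ≤ c2) (ht : 0 < t) :
    min (c1 * t ^ (p - 1)) c3 ≤ min (c1 * t ^ p + c2) (c3 * t) / t := by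
  rw [← min_div_div_right ht.le, Real.rpow_sub_one ht.ne', mul_div_cancel_right₀ _ ht.ne',
    add_div, mul_div_assoc]
  gcongr
  exact le_add_of_nonneg_right (div_nonneg hc2 ht.le)

theorem min_mul_rpow_sub_one_pos {p c1 c3 t : ℝ} (hc1 : 0 < c1) (hc3 : 0 < c3) (ht : 0 < t) :
    0 < min (c1 * t ^ (p - 1)) c3 :=
  lt_min (mul_pos hc1 (Real.rpow_pos_of_pos ht _)) hc3

section Counting

variable {ι : Type*} {s : Finset ι} {t D : ι → ℝ}

theorem card_le_rpow_sum_rpow_mul_rpow_sum (ht : ∀ i, 0 < t i) {p : ℝ} (hp : p < 1) :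
    (#s : ℝ) ≤ ((∑ i ∈ s, t i ^ (p - 1)) * (∑ i ∈ s, t i) ^ (1 - p)) ^ (1 / (2 - p)) := by
  have h2p : 0 < 2 - p := by linarith
  have holder := Real.inner_le_weight_mul_Lp_of_nonneg s (p := 2 - p) (by linarith) t
    (fun i => (t i)⁻¹) (fun i => (ht i).le) (fun i => (inv_pos.2 (ht i)).le)
  have h1 : ∀ i ∈ s, t i * (t i)⁻¹ = 1 := fun i _ => mul_inv_cancel₀ (ht i).ne'
  have h2 : ∀ i ∈ s, t i * (t i)⁻¹ ^ (2 - p) = t i ^ (p - 1) := fun i _ => by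
    rw [Real.inv_rpow (ht i).le, ← Real.rpow_neg (ht i).le,
      ← Real.rpow_one_add' (ht i).le (by linarith : 1 + -(2 - p) < 0).ne]
    ring_nf
  rw [sum_congr rfl h1, sum_congr rfl h2, sum_const, nsmul_one] at holder
  have hS := sum_nonneg fun i (_ : i ∈ s) => (ht i).le
  have hS' := sum_nonneg fun i (_ : i ∈ s) => (Real.rpow_pos_of_pos (ht i) (p - 1)).le
  rw [Real.mul_rpow hS' (by positivity), ← Real.rpow_mul hS, mul_comm]
  convert holder using 3 <;> field_simp
  ring

theorem card_le_inv_mul_sum {c : ℝ} (hc : 0 < c) (hD : ∀ i ∈ s, c ≤ D i) :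
    (#s : ℝ) ≤ c⁻¹ * ∑ i ∈ s, D i := by
  rw [inv_mul_eq_div, le_div_iff₀ hc]
  simpa using card_nsmul_le_sum s D c hD

theorem card_le_of_mul_rpow_sub_one_le {p c : ℝ} (hp : p < 1) (hc : 0 < c) (ht : ∀ i, 0 < t i)
    (hD : ∀ i ∈ s, c * t i ^ (p - 1) ≤ D i) :
    (#s : ℝ) ≤ (c⁻¹ * (∑ i ∈ s, D i) * (∑ i ∈ s, t i) ^ (1 - p)) ^ (1 / (2 - p)) := by
  refine (card_le_rpow_sum_rpow_mul_rpow_sum ht hp).trans ?_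
  have hsum : ∑ i ∈ s, t i ^ (p - 1) ≤ c⁻¹ * ∑ i ∈ s, D i := by
    rw [mul_sum]
    exact sum_le_sum fun i hi => by rw [le_inv_mul_iff₀ hc]; exact hD i hi
  have h2p : 0 < 2 - p := by linarith
  have hpos := sum_nonneg fun i (_ : i ∈ s) => (Real.rpow_pos_of_pos (ht i) (p - 1)).le
  have hS := sum_nonneg fun i (_ : i ∈ s) => (ht i).le
  have h1p : 0 ≤ 1 - p := by linarith
  gcongr

theorem card_le_of_min_lt {p c1 c3 S L : ℝ} (hp : p < 1) (hc1 : 0 < c1) (hc3 : 0 < c3)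
    (ht : ∀ i, 0 < t i) (hD : ∀ i ∈ s, min (c1 * t i ^ (p - 1)) c3 < D i)
    (hS : ∑ i ∈ s, D i ≤ S) (hL : ∑ i ∈ s, t i ≤ L) :
    (#s : ℝ) ≤ (c1⁻¹ * S * L ^ (1 - p)) ^ (1 / (2 - p)) + c3⁻¹ * S := by
  classical
  have hD0 : ∀ i ∈ s, 0 ≤ D i := fun i hi =>
    ((min_mul_rpow_sub_one_pos hc1 hc3 (ht i)).trans (hD i hi)).le
  have hsub {u : Finset ι} (hu : u ⊆ s) : ∑ i ∈ u, D i ≤ S :=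
    (sum_le_sum_of_subset_of_nonneg hu fun i hi _ => hD0 i hi).trans hS
  rw [← card_filter_add_card_filter_not (fun i => c3 < D i), Nat.cast_add, add_comm]
  refine add_le_add ?_ ((card_le_inv_mul_sum hc3 fun i hi => (mem_filter.1 hi).2.le).trans
    (mul_le_mul_of_nonneg_left (hsub (filter_subset _ s)) (inv_nonneg.2 hc3.le)))
  set B := s.filter fun i => ¬c3 < D i
  have hBD0 : 0 ≤ ∑ i ∈ B, D i := sum_nonneg fun i hi => hD0 i (filter_subset _ s hi)
  have hBD : ∑ i ∈ B, D i ≤ S := hsub (filter_subset _ s)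
  have hBt0 : 0 ≤ ∑ i ∈ B, t i := sum_nonneg fun i _ => (ht i).le
  have hBt : ∑ i ∈ B, t i ≤ L :=
    (sum_le_sum_of_subset_of_nonneg (filter_subset _ s) fun i _ _ => (ht i).le).trans hL
  have hS0 : 0 ≤ S := hBD0.trans hBD
  refine (card_le_of_mul_rpow_sub_one_le (D := D) hp hc1 ht fun i hi => ?_).trans ?_
  · obtain ⟨his, hi⟩ := mem_filter.1 hi
    exact ((min_lt_iff.1 (hD i his)).resolve_right hi).le
  have h2p : 0 < 2 - p := by linarith
  have h1p : 0 ≤ 1 - p := by linarith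
  gcongr

end Counting

theorem stmt_4_general (p c1 c2 c3 : ℝ) (hp : 1 / 2 ≤ p ∧ p < 1)
    (hc1 : 0 < c1) (hc2 : 0 < c2) (hc3 : 0 < c3)
    (Δ : ℕ → ℝ) (hΔ : ∀ τ, 0 ≤ Δ τ) (T : ℕ)
    (N : ℕ) (hN : 1 ≤ N) (st en : ℕ → ℕ)
    (h1 : st 0 = 1) (hend : en (N - 1) = T)
    (hle : ∀ i < N, st i ≤ en i)
    (hcons : ∀ i, i + 1 < N → st (i + 1) = en i + 1)
    (hbig : ∀ i, i + 1 < N →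
      (min (c1 * ((en i - st i + 1 : ℕ) : ℝ) ^ p + c2) (c3 * ((en i - st i + 1 : ℕ) : ℝ))) /
          ((en i - st i + 1 : ℕ) : ℝ)
        < ∑ τ ∈ Finset.Ico (st i) (en i), Δ τ) :
    N ≤ 1 + ((Finset.Ico 1 T).filter (fun τ => Δ τ ≠ 0)).card ∧
    (N : ℝ) ≤ 1 +
      2 * (c1⁻¹ * (∑ τ ∈ Finset.Ico 1 T, Δ τ) * (T : ℝ) ^ (1 - p)) ^ (1 / (2 - p))
      + c3⁻¹ * (∑ τ ∈ Finset.Ico 1 T, Δ τ) := by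
  set n := N - 1
  have hle' : ∀ i < n, st i ≤ en i := fun i hi => hle i (by omega)
  have hcons' : ∀ i < n, st (i + 1) = en i + 1 := fun i hi => hcons i (by omega)
  have hstT : st n ≤ T := hend ▸ hle n (by omega)
  set t : ℕ → ℝ := fun i => ((en i - st i + 1 : ℕ) : ℝ)
  have ht : ∀ i, 0 < t i := fun i => Nat.cast_pos.2 (Nat.succ_pos _)
  have hmass : ∀ i ∈ range n, min (c1 * t i ^ (p - 1)) c3 < ∑ τ ∈ Ico (st i) (en i), Δ τ :=
    fun i hi => (min_mul_rpow_sub_one_le_s4 hc2.le (ht i)).trans_lt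
      (hbig i (by have := mem_range.1 hi; omega))
  constructor
  · have := le_card_filter_ne_zero h1 hstT hle' hcons' Δ fun i hi =>
      exists_ne_zero_of_sum_ne_zero
        ((min_mul_rpow_sub_one_pos hc1 hc3 (ht i)).trans (hmass i (mem_range.2 hi))).ne'
    omega
  · have hlen : ∑ i ∈ range n, t i ≤ T := by
      simp only [t]; exact_mod_cast sum_range_tsub_add_one_le h1 hstT hle' hcons'
    have hcard := card_le_of_min_lt hp.2 hc1 hc3 ht hmass
      (sum_range_sum_Ico_le_sum_Ico h1 hstT hle' hcons' Δ hΔ) hlen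
    have hS0 : 0 ≤ ∑ τ ∈ Ico 1 T, Δ τ := sum_nonneg fun τ _ => hΔ τ
    have := Real.rpow_nonneg (by positivity : 0 ≤ c1⁻¹ * (∑ τ ∈ Ico 1 T, Δ τ) * (T : ℝ) ^ (1 - p))
      (1 / (2 - p))
    rw [card_range, Nat.cast_sub hN, Nat.cast_one] at hcard
    linarith

/-- With `C(t) = min (c1 t^p + c2) (c3 t)` and `ρ(t) = C(t)/t`: if `[1,T]`
is partitioned into consecutive intervals `E_1, …, E_N` such that `Δ_{E_i} > ρ(|E_i|)` for
every non-final `i`, then `N ≤ L_{[1,T]}` and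
`N ≤ 1 + 2 (c1⁻¹ Δ_{[1,T]} T^{1-p})^{1/(2-p)} + c3⁻¹ Δ_{[1,T]}`. -/
theorem stmt_4 (p c1 c2 c3 : ℝ) (hp : 1 / 2 ≤ p ∧ p < 1)
    (hc1 : 0 < c1) (hc2 : 0 < c2) (hc3 : 0 < c3)
    (Δ : ℕ → ℝ) (hΔ : ∀ τ, 0 ≤ Δ τ) (T : ℕ) (hT : 1 ≤ T)
    (N : ℕ) (hN : 1 ≤ N) (st en : ℕ → ℕ)
    (h1 : st 0 = 1) (hend : en (N - 1) = T)
    (hle : ∀ i < N, st i ≤ en i)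
    (hcons : ∀ i, i + 1 < N → st (i + 1) = en i + 1)
    (hbig : ∀ i, i + 1 < N →
      (min (c1 * ((en i - st i + 1 : ℕ) : ℝ) ^ p + c2) (c3 * ((en i - st i + 1 : ℕ) : ℝ))) /
          ((en i - st i + 1 : ℕ) : ℝ)
        < ∑ τ ∈ Finset.Ico (st i) (en i), Δ τ) :
    N ≤ 1 + ((Finset.Ico 1 T).filter (fun τ => Δ τ ≠ 0)).card ∧
    (N : ℝ) ≤ 1 +
      2 * (c1⁻¹ * (∑ τ ∈ Finset.Ico 1 T, Δ τ) * (T : ℝ) ^ (1 - p)) ^ (1 / (2 - p))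
      + c3⁻¹ * (∑ τ ∈ Finset.Ico 1 T, Δ τ) :=
  stmt_4_general p c1 c2 c3 hp hc1 hc2 hc3 Δ hΔ T N hN st en h1 hend hle hcons hbig
end

section
/- Let D̄, S, A, T > 0 be real numbers, let N ≥ 1 be an integer, let x_1, …, x_{N-1} be positive reals with Σ_{i=1}^{N-1} x_i ≤ T, and let ε_1, …, ε_{N-1} ≥ 0 satisfy ε_i ≥ D̄·S·√(A/x_i) for every i. Then N − 1 ≤ ( (Σ_{i=1}^{N-1} ε_i) / (D̄·S·√A) )^{2/3} · T^{1/3}. -/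
/-!
Writing `n = N - 1`, two applications of Cauchy–Schwarz give `n² ≤ (∑ √xᵢ)(∑ 1/√xᵢ)` and
`(∑ √xᵢ)² ≤ n ∑ xᵢ`, hence `n³ ≤ (∑ 1/√xᵢ)² ∑ xᵢ` (Hölder with exponents `3` and `3/2`).
The hypothesis on `εᵢ` bounds `∑ 1/√xᵢ` by `(∑ εᵢ)/(D̄ S √A)`, and `∑ xᵢ ≤ T`.
-/

open Finset Real

theorem card_cube_le_sq_sum_inv_sqrt_mul_sum {ι : Type*} (s : Finset ι) {x : ι → ℝ}
    (hx : ∀ i ∈ s, 0 < x i) :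
    (#s : ℝ) ^ 3 ≤ (∑ i ∈ s, (√(x i))⁻¹) ^ 2 * ∑ i ∈ s, x i := by
  have hcard_sq : (#s : ℝ) ^ 2 ≤ (∑ i ∈ s, √(x i)) * ∑ i ∈ s, (√(x i))⁻¹ := by
    simpa using sum_sq_le_sum_mul_sum_of_sq_le_mul s (r := fun _ => (1 : ℝ))
      (fun i _ => sqrt_nonneg (x i)) (fun i _ => inv_nonneg.2 (sqrt_nonneg (x i)))
      fun i hi => by rw [one_pow, mul_inv_cancel₀ (sqrt_pos.2 (hx i hi)).ne']
  have hsum_sqrt_sq : (∑ i ∈ s, √(x i)) ^ 2 ≤ #s * ∑ i ∈ s, x i := by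
    refine (sq_sum_le_card_mul_sum_sq ..).trans_eq ?_
    rw [sum_congr rfl fun i hi => sq_sqrt (hx i hi).le]
  rcases (Nat.cast_nonneg (α := ℝ) #s).eq_or_lt with hs | hs
  · rw [← hs, zero_pow three_ne_zero]
    exact mul_nonneg (sq_nonneg _) (sum_nonneg fun i hi => (hx i hi).le)
  refine le_of_mul_le_mul_left ?_ hs
  calc (#s : ℝ) * #s ^ 3 = ((#s : ℝ) ^ 2) ^ 2 := by ring
    _ ≤ ((∑ i ∈ s, √(x i)) * ∑ i ∈ s, (√(x i))⁻¹) ^ 2 := by gcongr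
    _ = (∑ i ∈ s, √(x i)) ^ 2 * (∑ i ∈ s, (√(x i))⁻¹) ^ 2 := mul_pow ..
    _ ≤ (#s * ∑ i ∈ s, x i) * (∑ i ∈ s, (√(x i))⁻¹) ^ 2 := by gcongr
    _ = #s * ((∑ i ∈ s, (√(x i))⁻¹) ^ 2 * ∑ i ∈ s, x i) := by ring

theorem le_rpow_two_thirds_mul_rpow_one_third {n B T : ℝ} (hB : 0 ≤ B) (hT : 0 ≤ T)
    (h : n ^ 3 ≤ B ^ 2 * T) : n ≤ B ^ ((2 : ℝ) / 3) * T ^ ((1 : ℝ) / 3) := by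
  have hcube : (B ^ ((2 : ℝ) / 3) * T ^ ((1 : ℝ) / 3)) ^ 3 = B ^ 2 * T := by
    rw [mul_pow, ← rpow_natCast, ← rpow_natCast (T ^ _), ← rpow_mul hB, ← rpow_mul hT]
    norm_num
  exact le_of_pow_le_pow_left₀ three_ne_zero (by positivity) (hcube ▸ h)

theorem sum_inv_sqrt_le_div {ι : Type*} (s : Finset ι) {c A : ℝ} {x ε : ι → ℝ} (hc : 0 < c)
    (hA : 0 < A) (hε : ∀ i ∈ s, c * √(A / x i) ≤ ε i) :
    ∑ i ∈ s, (√(x i))⁻¹ ≤ (∑ i ∈ s, ε i) / (c * √A) := by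
  rw [le_div_iff₀ (by positivity), sum_mul]
  refine sum_le_sum fun i hi => ?_
  calc (√(x i))⁻¹ * (c * √A) = c * √(A / x i) := by rw [sqrt_div hA.le]; ring
    _ ≤ ε i := hε i hi

theorem natCast_sub_one_le_natCast_pred (N : ℕ) : (N : ℝ) - 1 ≤ ((N - 1 : ℕ) : ℝ) := by
  rcases N with _ | N <;> simp

theorem stmt_5_general (D S A T : ℝ) (hD : 0 < D) (hS : 0 < S) (hA : 0 < A)
    (N : ℕ) (x ε : Fin (N - 1) → ℝ)
    (hx : ∀ i, 0 < x i) (hsum : ∑ i, x i ≤ T)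
    (hε : ∀ i, D * S * Real.sqrt (A / x i) ≤ ε i) :
    (N : ℝ) - 1 ≤
      ((∑ i, ε i) / (D * S * Real.sqrt A)) ^ ((2 : ℝ) / 3) * T ^ ((1 : ℝ) / 3) := by
  have hinv : ∑ i, (√(x i))⁻¹ ≤ (∑ i, ε i) / (D * S * √A) :=
    sum_inv_sqrt_le_div univ (by positivity) hA fun i _ => hε i
  have hcube := card_cube_le_sq_sum_inv_sqrt_mul_sum univ fun i _ => hx i
  rw [card_univ, Fintype.card_fin] at hcube
  have hinv_nonneg : 0 ≤ ∑ i, (√(x i))⁻¹ := sum_nonneg fun i _ => by positivity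
  have hsum_nonneg : 0 ≤ ∑ i, x i := sum_nonneg fun i _ => (hx i).le
  have hT : 0 ≤ T := hsum_nonneg.trans hsum
  refine (natCast_sub_one_le_natCast_pred N).trans (le_rpow_two_thirds_mul_rpow_one_third
    (hinv_nonneg.trans hinv) hT ?_)
  calc ((N - 1 : ℕ) : ℝ) ^ 3 ≤ (∑ i, (√(x i))⁻¹) ^ 2 * ∑ i, x i := hcube
    _ ≤ ((∑ i, ε i) / (D * S * √A)) ^ 2 * T := by gcongr

/-- If each of the `N-1` non-final epoch lengths `x_i > 0` satisfies
`Σ x_i ≤ T` and `ε_i ≥ D̄ S √(A/x_i)`, then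
`N - 1 ≤ ((Σ ε_i)/(D̄ S √A))^{2/3} T^{1/3}`. -/
theorem stmt_5 (D S A T : ℝ) (hD : 0 < D) (hS : 0 < S) (hA : 0 < A) (hT : 0 < T)
    (N : ℕ) (hN : 1 ≤ N) (x ε : Fin (N - 1) → ℝ)
    (hx : ∀ i, 0 < x i) (hsum : ∑ i, x i ≤ T)
    (hε0 : ∀ i, 0 ≤ ε i) (hε : ∀ i, D * S * Real.sqrt (A / x i) ≤ ε i) :
    (N : ℝ) - 1 ≤
      ((∑ i, ε i) / (D * S * Real.sqrt A)) ^ ((2 : ℝ) / 3) * T ^ ((1 : ℝ) / 3) :=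
  stmt_5_general D S A T hD hS hA N x ε hx hsum hε
end

section
/- Let d ≥ 1 and t ≥ 1 be integers, let a_1, …, a_{t-1} ∈ ℝ^d satisfy ‖a_τ‖₂ ≤ 1 for all τ, and let Λ := I_d + Σ_{τ=1}^{t-1} a_τ a_τᵀ (a positive definite, hence invertible, matrix). Then for every a ∈ ℝ^d, every ε ≥ 0, and all vectors v_1, …, v_{t-1} ∈ ℝ^d with ‖v_τ‖₂ ≤ ε for all τ, one has | aᵀ Λ^{-1} Σ_{τ=1}^{t-1} a_τ (a_τᵀ v_τ) | ≤ ε · √(d·(t−1)) · √(aᵀ Λ^{-1} a). -/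
/-! Writing the drift as `∑ c_τ (bᵀ Λ⁻¹ a_τ)` with `|c_τ| = |a_τᵀ v_τ| ≤ ε`, Cauchy–Schwarz for the
`Λ⁻¹`-form and then over `τ` bounds it by `ε √((t-1) ∑ a_τᵀ Λ⁻¹ a_τ) √(bᵀ Λ⁻¹ b)`; finally
`∑ a_τᵀ Λ⁻¹ a_τ = tr (Λ⁻¹ (Λ - 1)) = d - tr Λ⁻¹ ≤ d`. -/

open Finset Matrix

namespace Matrix

variable {ι n : Type*} [Fintype n]

theorem PosSemidef.abs_dotProduct_mulVec_le {M : Matrix n n ℝ} (hM : M.PosSemidef) (x y : n → ℝ) :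
    |x ⬝ᵥ M *ᵥ y| ≤ √(x ⬝ᵥ M *ᵥ x) * √(y ⬝ᵥ M *ᵥ y) := by
  classical
  have hsymm : y ⬝ᵥ M *ᵥ x = x ⬝ᵥ M *ᵥ y := by
    rw [dotProduct_mulVec, ← mulVec_transpose, ← conjTranspose_eq_transpose_of_trivial,
      hM.isHermitian, dotProduct_comm]
  have hcs := (toBilin' M).apply_mul_apply_le_of_forall_zero_le
    (fun z ↦ by simpa [toBilin'_apply'] using hM.dotProduct_mulVec_nonneg z) x y
  simp only [toBilin'_apply', hsymm, ← sq] at hcs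
  rw [← Real.sqrt_mul (by simpa using hM.dotProduct_mulVec_nonneg x)]
  exact Real.abs_le_sqrt hcs

theorem abs_dotProduct_le_sqrt_mul_sqrt (u w : n → ℝ) :
    |u ⬝ᵥ w| ≤ √(∑ i, u i ^ 2) * √(∑ i, w i ^ 2) := by
  classical
  simpa [dotProduct, sq] using PosSemidef.one.abs_dotProduct_mulVec_le u w

theorem posDef_one_add_sum_vecMulVec_self [DecidableEq n] (s : Finset ι) (a : ι → n → ℝ) :
    (1 + ∑ τ ∈ s, vecMulVec (a τ) (a τ)).PosDef :=
  PosDef.one.add_posSemidef <| posSemidef_sum s fun τ _ ↦ by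
    simpa using posSemidef_vecMulVec_self_star (a τ)

theorem dotProduct_mulVec_self_eq_trace_mul_vecMulVec (M : Matrix n n ℝ) (x : n → ℝ) :
    x ⬝ᵥ M *ᵥ x = trace (M * vecMulVec x x) := by
  rw [mul_vecMulVec, trace_vecMulVec, dotProduct_comm]

theorem sum_dotProduct_inv_mulVec_le_card [DecidableEq n] (s : Finset ι) (a : ι → n → ℝ) :
    ∑ τ ∈ s, a τ ⬝ᵥ (1 + ∑ σ ∈ s, vecMulVec (a σ) (a σ))⁻¹ *ᵥ a τ ≤ Fintype.card n := by
  set Λ := 1 + ∑ σ ∈ s, vecMulVec (a σ) (a σ) with hΛ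
  have hΛpd : Λ.PosDef := posDef_one_add_sum_vecMulVec_self s a
  calc ∑ τ ∈ s, a τ ⬝ᵥ Λ⁻¹ *ᵥ a τ = trace (Λ⁻¹ * (Λ - 1)) := by
        simp only [hΛ, add_sub_cancel_left, Matrix.mul_sum, trace_sum,
          dotProduct_mulVec_self_eq_trace_mul_vecMulVec]
    _ = Fintype.card n - trace Λ⁻¹ := by
        rw [Matrix.mul_sub, nonsing_inv_mul Λ hΛpd.det_pos.ne'.isUnit, Matrix.mul_one, trace_sub,
          trace_one]
    _ ≤ Fintype.card n := sub_le_self _ hΛpd.inv.posSemidef.trace_nonneg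

theorem PosSemidef.abs_dotProduct_mulVec_sum_smul_le {M : Matrix n n ℝ} (hM : M.PosSemidef)
    (s : Finset ι) (a : ι → n → ℝ) (c : ι → ℝ) {ε : ℝ} (hε : 0 ≤ ε)
    (hc : ∀ τ ∈ s, |c τ| ≤ ε) (b : n → ℝ) :
    |b ⬝ᵥ M *ᵥ ∑ τ ∈ s, c τ • a τ| ≤
      ε * √(#s * ∑ τ ∈ s, a τ ⬝ᵥ M *ᵥ a τ) * √(b ⬝ᵥ M *ᵥ b) := by
  have hq : ∀ τ, 0 ≤ a τ ⬝ᵥ M *ᵥ a τ := fun τ ↦ by simpa using hM.dotProduct_mulVec_nonneg (a τ)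
  have hsum_sqrt : ∑ τ ∈ s, √(a τ ⬝ᵥ M *ᵥ a τ) ≤ √(#s * ∑ τ ∈ s, a τ ⬝ᵥ M *ᵥ a τ) := by
    rw [Real.sqrt_mul (Nat.cast_nonneg _)]
    simpa using Real.sum_sqrt_mul_sqrt_le s (fun _ ↦ zero_le_one) hq
  calc |b ⬝ᵥ M *ᵥ ∑ τ ∈ s, c τ • a τ| = |∑ τ ∈ s, c τ * (b ⬝ᵥ M *ᵥ a τ)| := by
        simp only [mulVec_sum, mulVec_smul, dotProduct_sum, dotProduct_smul, smul_eq_mul]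
    _ ≤ ∑ τ ∈ s, |c τ| * |b ⬝ᵥ M *ᵥ a τ| := by
        simpa only [abs_mul] using abs_sum_le_sum_abs (fun τ ↦ c τ * (b ⬝ᵥ M *ᵥ a τ)) s
    _ ≤ ∑ τ ∈ s, ε * (√(b ⬝ᵥ M *ᵥ b) * √(a τ ⬝ᵥ M *ᵥ a τ)) :=
        sum_le_sum fun τ hτ ↦ mul_le_mul (hc τ hτ) (hM.abs_dotProduct_mulVec_le b (a τ))
          (abs_nonneg _) hε
    _ = ε * √(b ⬝ᵥ M *ᵥ b) * ∑ τ ∈ s, √(a τ ⬝ᵥ M *ᵥ a τ) := by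
        rw [mul_sum]; simp only [mul_assoc]
    _ ≤ ε * √(#s * ∑ τ ∈ s, a τ ⬝ᵥ M *ᵥ a τ) * √(b ⬝ᵥ M *ᵥ b) := by
        rw [mul_right_comm]; gcongr

end Matrix

theorem stmt_7_general (d t : ℕ) (ht : 1 ≤ t)
    (a : ℕ → Fin d → ℝ)
    (ha : ∀ τ ∈ Finset.Icc 1 (t - 1), Real.sqrt (∑ i, a τ i ^ 2) ≤ 1)
    (Λ : Matrix (Fin d) (Fin d) ℝ)
    (hΛ : Λ = 1 + ∑ τ ∈ Finset.Icc 1 (t - 1), Matrix.vecMulVec (a τ) (a τ))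
    (b : Fin d → ℝ) (ε : ℝ) (hε : 0 ≤ ε)
    (v : ℕ → Fin d → ℝ)
    (hv : ∀ τ ∈ Finset.Icc 1 (t - 1), Real.sqrt (∑ i, v τ i ^ 2) ≤ ε) :
    |b ⬝ᵥ Λ⁻¹.mulVec (∑ τ ∈ Finset.Icc 1 (t - 1), (a τ ⬝ᵥ v τ) • a τ)| ≤
      ε * Real.sqrt ((d : ℝ) * ((t : ℝ) - 1)) * Real.sqrt (b ⬝ᵥ Λ⁻¹.mulVec b) := by
  set S := Finset.Icc 1 (t - 1)
  have hc : ∀ τ ∈ S, |a τ ⬝ᵥ v τ| ≤ ε := fun τ hτ ↦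
    (abs_dotProduct_le_sqrt_mul_sqrt _ _).trans <| by
      simpa using mul_le_mul (ha τ hτ) (hv τ hτ) (Real.sqrt_nonneg _) zero_le_one
  have hcard : (#S : ℝ) = t - 1 := by simp [S, Nat.cast_sub ht]
  have htrace : ∑ τ ∈ S, a τ ⬝ᵥ Λ⁻¹ *ᵥ a τ ≤ d := by
    simpa [hΛ] using sum_dotProduct_inv_mulVec_le_card S a
  have hΛpd : Λ.PosDef := hΛ ▸ posDef_one_add_sum_vecMulVec_self S a
  calc _ ≤ ε * √(#S * ∑ τ ∈ S, a τ ⬝ᵥ Λ⁻¹ *ᵥ a τ) * √(b ⬝ᵥ Λ⁻¹ *ᵥ b) :=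
        hΛpd.inv.posSemidef.abs_dotProduct_mulVec_sum_smul_le S a _ hε hc b
    _ ≤ ε * √(d * (t - 1)) * √(b ⬝ᵥ Λ⁻¹ *ᵥ b) := by
        rw [hcard, mul_comm (d : ℝ)]
        gcongr
        linarith [(Nat.one_le_cast (α := ℝ)).mpr ht]

/-- With `Λ = I_d + Σ_τ a_τ a_τᵀ` built from vectors of Euclidean norm at
most `1`, for every vector `a`, every `ε ≥ 0`, and vectors `v_τ` with `‖v_τ‖₂ ≤ ε`,
`|aᵀ Λ⁻¹ Σ_τ a_τ (a_τᵀ v_τ)| ≤ ε √(d(t-1)) √(aᵀ Λ⁻¹ a)`. -/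
theorem stmt_7 (d t : ℕ) (hd : 1 ≤ d) (ht : 1 ≤ t)
    (a : ℕ → Fin d → ℝ)
    (ha : ∀ τ ∈ Finset.Icc 1 (t - 1), Real.sqrt (∑ i, a τ i ^ 2) ≤ 1)
    (Λ : Matrix (Fin d) (Fin d) ℝ)
    (hΛ : Λ = 1 + ∑ τ ∈ Finset.Icc 1 (t - 1), Matrix.vecMulVec (a τ) (a τ))
    (b : Fin d → ℝ) (ε : ℝ) (hε : 0 ≤ ε)
    (v : ℕ → Fin d → ℝ)
    (hv : ∀ τ ∈ Finset.Icc 1 (t - 1), Real.sqrt (∑ i, v τ i ^ 2) ≤ ε) :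
    |b ⬝ᵥ Λ⁻¹.mulVec (∑ τ ∈ Finset.Icc 1 (t - 1), (a τ ⬝ᵥ v τ) • a τ)| ≤
      ε * Real.sqrt ((d : ℝ) * ((t : ℝ) - 1)) * Real.sqrt (b ⬝ᵥ Λ⁻¹.mulVec b) :=
  stmt_7_general d t ht a ha Λ hΛ b ε hε v hv
end

section
/- There exists a universal constant K > 0 such that for all p ∈ [1/2, 1), all c1, c2, c3 > 0, every function Δ : ℕ → ℝ with Δ(τ) ≥ 0 for all τ, and every interval J of positive integers, setting C(t) := min{c1·t^p + c2, c3·t} and ρ(t) := C(t)/t, there exists a partition of J into consecutive intervals I_1, …, I_ℓ with Δ_{I_i} ≤ ρ(|I_i|) for every i and Σ_{i=1}^ℓ (c1·|I_i|^p + c2) ≤ K · min{ c1·L_J^{1-p}·|J|^p + c2·L_J , (c1·Δ_J^{1-p}·|J|)^{1/(2-p)} + c1·|J|^p + c1·(c3^{-1}·Δ_J)^{1-p}·|J|^p + c2·(c1^{-1}·Δ_J·|J|^{1-p})^{1/(2-p)} + c2 + c2·c3^{-1}·Δ_J }. -/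
/-!
Cut `J` greedily from the left, making each block as long as the constraint `Δ_I ≤ ρ(|I|)`
allows, so that every block but the last violates the constraint once it is extended by one
point. By concavity of `t ↦ t ^ p`, `ℓ` blocks covering `|J|` points cost at most
`c1 ℓ^{1-p} |J|^p + c2 ℓ`, so it suffices to bound `ℓ`. The non-last blocks, each extended by
one point, are disjoint subintervals of `J` carrying `Δ`-mass above `ρ` of their length. Hence
each contains a change point, giving `ℓ ≤ L_J`; and each carries mass above `c3` (at most
`Δ_J / c3` such blocks) or above `c1 (|I| + 1)^{p-1}`, and Hölder's inequality bounds the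
number of the latter by `(c1⁻¹ Δ_J (2|J|)^{1-p})^{1/(2-p)}`.
-/
open Finset Real

theorem sum_rpow_mul_rpow_one_sub_le {ι : Type*} (s : Finset ι) {x y : ι → ℝ}
    (hx : ∀ i ∈ s, 0 ≤ x i) (hy : ∀ i ∈ s, 0 ≤ y i) {θ : ℝ} (hθ₀ : 0 < θ) (hθ₁ : θ < 1) :
    ∑ i ∈ s, x i ^ θ * y i ^ (1 - θ) ≤ (∑ i ∈ s, x i) ^ θ * (∑ i ∈ s, y i) ^ (1 - θ) := by
  have h := inner_le_Lp_mul_Lq_of_nonneg s (HolderConjugate.inv_one_sub_inv hθ₀ hθ₁)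
    (fun i hi => rpow_nonneg (hx i hi) θ) (fun i hi => rpow_nonneg (hy i hi) (1 - θ))
  rwa [sum_congr rfl fun i hi => rpow_rpow_inv (hx i hi) hθ₀.ne',
    sum_congr rfl fun i hi => rpow_rpow_inv (hy i hi) (sub_pos.2 hθ₁).ne',
    one_div, one_div, inv_inv, inv_inv] at h

theorem sum_rpow_le_card_rpow_mul_rpow_sum {ι : Type*} (s : Finset ι) {x : ι → ℝ}
    (hx : ∀ i ∈ s, 0 ≤ x i) {p : ℝ} (hp₀ : 0 < p) (hp₁ : p < 1) :
    ∑ i ∈ s, x i ^ p ≤ (#s : ℝ) ^ (1 - p) * (∑ i ∈ s, x i) ^ p := by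
  simpa [mul_comm] using sum_rpow_mul_rpow_one_sub_le s hx (fun _ _ => zero_le_one) hp₀ hp₁

theorem exists_greedy_cuts (F : ℕ → ℕ → Prop) (hF : ∀ a, F a 1) (s N : ℕ) :
    ∃ (ℓ : ℕ) (b : ℕ → ℕ), StrictMono b ∧ b 0 = s ∧ b ℓ = s + N ∧
      (∀ i < ℓ, F (b i) (b (i + 1) - b i)) ∧
      (∀ i, i + 1 < ℓ → ¬ F (b i) (b (i + 1) - b i + 1)) := by
  classical
  induction N using Nat.strong_induction_on generalizing s with
  | _ N ih =>
  rcases Nat.eq_zero_or_pos N with rfl | hN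
  · exact ⟨0, (s + ·), strictMono_id.const_add s, rfl, rfl, by simp, by simp⟩
  set k := Nat.findGreatest (F s) N
  have hk : 1 ≤ k := Nat.le_findGreatest hN (hF s)
  obtain ⟨ℓ, b, hb, hb0, hbℓ, hfeas, hmax⟩ := ih (N - k) (by omega) (s + k)
  refine ⟨ℓ + 1, fun | 0 => s | i + 1 => b i, strictMono_nat_of_lt_succ ?_, rfl, ?_, ?_, ?_⟩
  · rintro (_ | i)
    · show s < b 0; omega
    · exact hb (lt_add_one i)
  · show b ℓ = s + N
    have := Nat.findGreatest_le (P := F s) N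
    omega
  · rintro (_ | i) hi
    · simpa [hb0] using Nat.findGreatest_spec hN (hF s)
    · exact hfeas i (by omega)
  · rintro (_ | i) hi
    · have hkN : k < N := by have := hb (show 0 < ℓ by omega); omega
      simpa [hb0] using Nat.findGreatest_is_greatest (lt_add_one k) hkN
    · exact hmax i (by omega)

theorem sum_range_sum_Ico_eq {M : Type*} [AddCommMonoid M] (f : ℕ → M) {b : ℕ → ℕ}
    (hb : Monotone b) (k : ℕ) :
    ∑ i ∈ range k, ∑ τ ∈ Ico (b i) (b (i + 1)), f τ = ∑ τ ∈ Ico (b 0) (b k), f τ := by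
  induction k with
  | zero => simp
  | succ k ih =>
    rw [sum_range_succ, ih, sum_Ico_consecutive f (hb k.zero_le) (hb k.le_succ)]

theorem le_card_filter_Ico {P : ℕ → Prop} [DecidablePred P] {b : ℕ → ℕ} (hb : Monotone b)
    {k : ℕ} (h : ∀ i < k, ∃ τ ∈ Ico (b i) (b (i + 1)), P τ) :
    k ≤ #{τ ∈ Ico (b 0) (b k) | P τ} := by
  rw [card_filter, ← sum_range_sum_Ico_eq _ hb]
  calc k = ∑ i ∈ range k, 1 := by simp
    _ ≤ _ := sum_le_sum fun i hi => by
      obtain ⟨τ, hτ, hP⟩ := h i (mem_range.1 hi)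
      rw [← card_filter]
      exact card_pos.2 ⟨τ, mem_filter.2 ⟨hτ, hP⟩⟩

noncomputable def rho (p c1 c2 c3 t : ℝ) : ℝ := min (c1 * t ^ p + c2) (c3 * t) / t

noncomputable def regL (p c1 c2 N L : ℝ) : ℝ := c1 * L ^ (1 - p) * N ^ p + c2 * L

noncomputable def regΔ (p c1 c2 c3 N D : ℝ) : ℝ :=
  (c1 * D ^ (1 - p) * N) ^ (1 / (2 - p)) + c1 * N ^ p + c1 * (c3⁻¹ * D) ^ (1 - p) * N ^ p
    + c2 * (c1⁻¹ * D * N ^ (1 - p)) ^ (1 / (2 - p)) + c2 + c2 * c3⁻¹ * D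

section Regret

variable {p c1 c2 c3 : ℝ}

theorem rho_pos (hc1 : 0 ≤ c1) (hc2 : 0 < c2) (hc3 : 0 < c3) {t : ℝ} (ht : 0 < t) :
    0 < rho p c1 c2 c3 t :=
  div_pos (lt_min (by positivity) (by positivity)) ht

theorem lt_mul_rpow_or_lt_of_rho_lt (hc2 : 0 ≤ c2) {t S : ℝ} (ht : 0 < t)
    (h : rho p c1 c2 c3 t < S) :
    c1 < S * t ^ (1 - p) ∨ c3 < S := by
  rw [rho, ← min_div_div_right ht.le, min_lt_iff, mul_div_cancel_right₀ _ ht.ne'] at h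
  refine h.imp (fun h => ?_) id
  rw [div_lt_iff₀ ht] at h
  have : c1 * t ^ p < S * t ^ (1 - p) * t ^ p := by
    rw [mul_assoc, ← rpow_add ht, sub_add_cancel, rpow_one]
    linarith
  exact lt_of_mul_lt_mul_right this (rpow_nonneg ht.le p)

theorem regL_mono (hp : p ≤ 1) (hc1 : 0 ≤ c1) (hc2 : 0 ≤ c2) {N L L' : ℝ} (hN : 0 ≤ N)
    (hL : 0 ≤ L) (hLL' : L ≤ L') : regL p c1 c2 N L ≤ regL p c1 c2 N L' := by
  have := sub_nonneg.2 hp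
  unfold regL
  gcongr

theorem sum_cost_le_regL (hp₀ : 0 < p) (hp₁ : p < 1) (hc1 : 0 ≤ c1) {ι : Type*} (s : Finset ι)
    {x : ι → ℝ} (hx : ∀ i ∈ s, 0 ≤ x i) :
    ∑ i ∈ s, (c1 * x i ^ p + c2) ≤ regL p c1 c2 (∑ i ∈ s, x i) #s := by
  calc ∑ i ∈ s, (c1 * x i ^ p + c2) = c1 * ∑ i ∈ s, x i ^ p + c2 * #s := by
        rw [sum_add_distrib, ← mul_sum, sum_const, nsmul_eq_mul, mul_comm c2]
    _ ≤ c1 * ((#s : ℝ) ^ (1 - p) * (∑ i ∈ s, x i) ^ p) + c2 * #s := by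
        gcongr
        exact sum_rpow_le_card_rpow_mul_rpow_sum s hx hp₀ hp₁
    _ = regL p c1 c2 (∑ i ∈ s, x i) #s := by rw [regL]; ring

theorem card_le_of_le_mul_rpow {ι : Type*} (A : Finset ι) {S w : ι → ℝ} {c D W : ℝ}
    (hc : 0 < c) (hp : p < 1) (hS : ∀ i ∈ A, 0 ≤ S i) (hw : ∀ i ∈ A, 0 ≤ w i)
    (h : ∀ i ∈ A, c ≤ S i * w i ^ (1 - p)) (hSD : ∑ i ∈ A, S i ≤ D) (hwW : ∑ i ∈ A, w i ≤ W) :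
    (#A : ℝ) ≤ (c⁻¹ * D * W ^ (1 - p)) ^ (1 / (2 - p)) := by
  have h2p : 0 < 2 - p := by linarith
  have hα₀ : 0 < 1 / (2 - p) := by positivity
  have hα₁ : 1 / (2 - p) < 1 := by rw [div_lt_one h2p]; linarith
  have hexp : (1 - p) * (1 / (2 - p)) = 1 - 1 / (2 - p) := by field_simp; ring
  have hD : 0 ≤ D := (sum_nonneg hS).trans hSD
  have hW : 0 ≤ W := (sum_nonneg hw).trans hwW
  have hone : ∀ i ∈ A, 1 ≤ (c⁻¹ * S i) ^ (1 / (2 - p)) * w i ^ (1 - 1 / (2 - p)) := by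
    intro i hi
    have := hS i hi
    have := hw i hi
    rw [← hexp, rpow_mul (hw i hi), ← mul_rpow (by positivity) (by positivity), mul_assoc]
    exact one_le_rpow (by rw [le_inv_mul_iff₀ hc, mul_one]; exact h i hi) hα₀.le
  calc (#A : ℝ) = ∑ i ∈ A, 1 := by simp
    _ ≤ ∑ i ∈ A, (c⁻¹ * S i) ^ (1 / (2 - p)) * w i ^ (1 - 1 / (2 - p)) := sum_le_sum hone
    _ ≤ (∑ i ∈ A, c⁻¹ * S i) ^ (1 / (2 - p)) * (∑ i ∈ A, w i) ^ (1 - 1 / (2 - p)) :=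
        sum_rpow_mul_rpow_one_sub_le A (fun i hi => mul_nonneg (by positivity) (hS i hi)) hw
          hα₀ hα₁
    _ ≤ (c⁻¹ * D) ^ (1 / (2 - p)) * W ^ (1 - 1 / (2 - p)) := by
        have := sum_nonneg hS
        have := sum_nonneg hw
        rw [← mul_sum]
        gcongr
    _ = (c⁻¹ * D * W ^ (1 - p)) ^ (1 / (2 - p)) := by
        rw [← hexp, rpow_mul hW, ← mul_rpow (by positivity) (by positivity)]

theorem exists_card_split_of_rho_lt (hc1 : 0 < c1) (hc2 : 0 ≤ c2) (hc3 : 0 < c3) (hp : p < 1)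
    {ι : Type*} (R : Finset ι) {w S : ι → ℝ} {D W : ℝ} (hw : ∀ i ∈ R, 0 < w i)
    (hS : ∀ i ∈ R, 0 ≤ S i) (hρ : ∀ i ∈ R, rho p c1 c2 c3 (w i) < S i)
    (hSD : ∑ i ∈ R, S i ≤ D) (hwW : ∑ i ∈ R, w i ≤ W) :
    ∃ a b : ℝ, 0 ≤ a ∧ 0 ≤ b ∧ (#R : ℝ) ≤ a + b ∧
      a ≤ (c1⁻¹ * D * W ^ (1 - p)) ^ (1 / (2 - p)) ∧ b ≤ c3⁻¹ * D := by
  classical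
  set A := {i ∈ R | c1 < S i * w i ^ (1 - p)}
  set B := {i ∈ R | c3 < S i}
  have hSsub : ∀ X ⊆ R, ∑ i ∈ X, S i ≤ D := fun X hX =>
    (sum_le_sum_of_subset_of_nonneg hX fun i hi _ => hS i hi).trans hSD
  have hcover : R ⊆ A ∪ B := by
    intro i hi
    rcases lt_mul_rpow_or_lt_of_rho_lt hc2 (hw i hi) (hρ i hi) with h | h <;> simp [A, B, hi, h]
  refine ⟨#A, #B, by positivity, by positivity, ?_, ?_, ?_⟩
  · exact_mod_cast (card_le_card hcover).trans (card_union_le A B)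
  · refine card_le_of_le_mul_rpow A hc1 hp (fun i hi => hS i (mem_filter.1 hi).1)
      (fun i hi => (hw i (mem_filter.1 hi).1).le) (fun i hi => (mem_filter.1 hi).2.le)
      (hSsub A (filter_subset _ _)) ?_
    exact (sum_le_sum_of_subset_of_nonneg (filter_subset _ _) fun i hi _ => (hw i hi).le).trans hwW
  · have := card_nsmul_le_sum B S c3 fun i hi => (mem_filter.1 hi).2.le
    rw [nsmul_eq_mul] at this
    rw [le_inv_mul_iff₀ hc3]
    linarith [hSsub B (filter_subset _ _)]

theorem mul_rpow_one_sub_mul_rpow (hp : p < 2) (hc1 : 0 < c1) {D N : ℝ} (hD : 0 ≤ D)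
    (hN : 0 < N) :
    c1 * ((c1⁻¹ * D * N ^ (1 - p)) ^ (1 / (2 - p))) ^ (1 - p) * N ^ p =
      (c1 * D ^ (1 - p) * N) ^ (1 / (2 - p)) := by
  have h2p : 2 - p ≠ 0 := by linarith
  have e1 : c1 * c1 ^ (-(1 / (2 - p) * (1 - p))) = c1 ^ (1 / (2 - p)) := by
    rw [mul_comm, ← rpow_add_one hc1.ne']
    congr 1
    field_simp
    ring
  have e2 : N ^ ((1 - p) * (1 / (2 - p) * (1 - p))) * N ^ p = N ^ (1 / (2 - p)) := by
    rw [← rpow_add hN]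
    congr 1
    field_simp
    ring
  rw [← rpow_mul (by positivity), mul_rpow (by positivity) (by positivity),
    mul_rpow (by positivity) hD, mul_rpow (by positivity) hN.le,
    mul_rpow hc1.le (by positivity), ← rpow_mul hD, ← rpow_mul hN.le, inv_rpow hc1.le,
    ← rpow_neg hc1.le, ← e1, ← e2, mul_comm (1 - p) (1 / (2 - p))]
  ring

theorem two_rpow_le_two {x : ℝ} (hx : x ≤ 1) : (2 : ℝ) ^ x ≤ 2 := by
  simpa using rpow_le_rpow_of_exponent_le one_le_two hx

theorem regL_le_two_mul_regΔ (hp₀ : 0 ≤ p) (hp₁ : p < 1) (hc1 : 0 < c1) (hc2 : 0 ≤ c2)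
    (hc3 : 0 < c3) {N D L a b : ℝ} (hN : 0 < N) (hD : 0 ≤ D) (hL : 0 ≤ L) (ha : 0 ≤ a)
    (hb : 0 ≤ b) (hLab : L ≤ 1 + a + b)
    (ha' : a ≤ (c1⁻¹ * D * (2 * N) ^ (1 - p)) ^ (1 / (2 - p))) (hb' : b ≤ c3⁻¹ * D) :
    regL p c1 c2 N L ≤ 2 * regΔ p c1 c2 c3 N D := by
  have h1p : 0 ≤ 1 - p := by linarith
  set z := (c1⁻¹ * D * N ^ (1 - p)) ^ (1 / (2 - p))
  have hz : a ≤ 2 * z := by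
    have hinner : c1⁻¹ * D * (2 * N) ^ (1 - p) ≤ 2 * (c1⁻¹ * D * N ^ (1 - p)) := by
      rw [mul_rpow zero_le_two hN.le]
      have := two_rpow_le_two (x := 1 - p) (by linarith)
      nlinarith [show 0 ≤ c1⁻¹ * D * N ^ (1 - p) by positivity]
    refine ha'.trans ?_
    calc (c1⁻¹ * D * (2 * N) ^ (1 - p)) ^ (1 / (2 - p))
        ≤ (2 * (c1⁻¹ * D * N ^ (1 - p))) ^ (1 / (2 - p)) :=
          rpow_le_rpow (by positivity) hinner (by rw [one_div_nonneg]; linarith)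
      _ ≤ 2 * z := by
          rw [mul_rpow zero_le_two (by positivity)]
          gcongr
          exact two_rpow_le_two (by rw [div_le_one (by linarith)]; linarith)
  have hA : c1 * a ^ (1 - p) * N ^ p ≤ 2 * (c1 * D ^ (1 - p) * N) ^ (1 / (2 - p)) := by
    rw [← mul_rpow_one_sub_mul_rpow (by linarith) hc1 hD hN]
    calc c1 * a ^ (1 - p) * N ^ p ≤ c1 * (2 * z) ^ (1 - p) * N ^ p := by gcongr
      _ ≤ c1 * (2 * z ^ (1 - p)) * N ^ p := by
          rw [mul_rpow zero_le_two (by positivity)]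
          gcongr
          exact two_rpow_le_two (by linarith)
      _ = 2 * (c1 * z ^ (1 - p) * N ^ p) := by ring
  have hB : c1 * b ^ (1 - p) * N ^ p ≤ c1 * (c3⁻¹ * D) ^ (1 - p) * N ^ p := by gcongr
  have hsub : (1 + a + b) ^ (1 - p) ≤ 1 + a ^ (1 - p) + b ^ (1 - p) := by
    calc (1 + a + b) ^ (1 - p) ≤ (1 + a) ^ (1 - p) + b ^ (1 - p) :=
          rpow_add_le_add_rpow (by positivity) hb h1p (by linarith)
      _ ≤ 1 + a ^ (1 - p) + b ^ (1 - p) := by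
          gcongr
          simpa using rpow_add_le_add_rpow zero_le_one ha h1p (by linarith)
  calc regL p c1 c2 N L ≤ regL p c1 c2 N (1 + a + b) :=
        regL_mono hp₁.le hc1.le hc2 hN.le hL hLab
    _ ≤ c1 * (1 + a ^ (1 - p) + b ^ (1 - p)) * N ^ p + c2 * (1 + a + b) := by
        unfold regL
        gcongr
    _ ≤ 2 * regΔ p c1 c2 c3 N D := by
        unfold regΔ
        have : 0 ≤ c1 * N ^ p := by positivity
        have : 0 ≤ c1 * (c3⁻¹ * D) ^ (1 - p) * N ^ p := by positivity
        have : 0 ≤ c2 * c3⁻¹ * D := by positivity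
        linarith [mul_le_mul_of_nonneg_left hz hc2, mul_le_mul_of_nonneg_left hb' hc2]

end Regret

section GreedyCuts

variable {p c1 c2 c3 : ℝ} {Δ : ℕ → ℝ} {ℓ s e : ℕ} {b : ℕ → ℕ}

theorem Ico_cuts_subset (hb : StrictMono b) (hb0 : b 0 = s) (hbℓ : b ℓ = e + 1) (hℓ : 0 < ℓ) :
    Ico (b 0) (b (ℓ - 1)) ⊆ Ico s e :=
  Ico_subset_Ico hb0.ge (by have := hb (Nat.sub_lt hℓ one_pos); omega)

theorem sum_cost_cuts_le_regL (hp₀ : 0 < p) (hp₁ : p < 1) (hc1 : 0 ≤ c1) (hb : StrictMono b)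
    (hb0 : b 0 = s) (hbℓ : b ℓ = e + 1) (hℓ : 0 < ℓ) :
    ∑ i ∈ range ℓ, (c1 * ((b (i + 1) - b i : ℕ) : ℝ) ^ p + c2) ≤
      regL p c1 c2 ((e - s + 1 : ℕ) : ℝ) ℓ := by
  have hN : b ℓ - b 0 = e - s + 1 := by have := hb hℓ; omega
  have := sum_cost_le_regL (c2 := c2) hp₀ hp₁ hc1 (range ℓ)
    (x := fun i => ((b (i + 1) - b i : ℕ) : ℝ)) fun _ _ => Nat.cast_nonneg _
  rwa [← Nat.cast_sum, sum_range_tsub hb.monotone, hN, card_range] at this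

theorem sum_cost_cuts_le_regL_card (hp₀ : 0 < p) (hp₁ : p < 1) (hc1 : 0 < c1) (hc2 : 0 < c2)
    (hc3 : 0 < c3) (hb : StrictMono b) (hb0 : b 0 = s) (hbℓ : b ℓ = e + 1) (hℓ : 0 < ℓ)
    (hmax : ∀ i, i + 1 < ℓ →
      rho p c1 c2 c3 ((b (i + 1) - b i + 1 : ℕ) : ℝ) < ∑ τ ∈ Ico (b i) (b (i + 1)), Δ τ) :
    ∑ i ∈ range ℓ, (c1 * ((b (i + 1) - b i : ℕ) : ℝ) ^ p + c2) ≤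
      regL p c1 c2 ((e - s + 1 : ℕ) : ℝ) ((1 + #{τ ∈ Ico s e | Δ τ ≠ 0} : ℕ) : ℝ) := by
  have hnz : ℓ - 1 ≤ #{τ ∈ Ico s e | Δ τ ≠ 0} := by
    refine (le_card_filter_Ico hb.monotone fun i hi => ?_).trans
      (card_le_card (filter_subset_filter _ (Ico_cuts_subset hb hb0 hbℓ hℓ)))
    exact exists_ne_zero_of_sum_ne_zero
      ((rho_pos hc1.le hc2 hc3 (by positivity)).trans (hmax i (by omega))).ne'
  refine (sum_cost_cuts_le_regL hp₀ hp₁ hc1.le hb hb0 hbℓ hℓ).trans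
    (regL_mono hp₁.le hc1.le hc2.le (Nat.cast_nonneg _) (Nat.cast_nonneg _) ?_)
  exact_mod_cast (by omega : ℓ ≤ 1 + #{τ ∈ Ico s e | Δ τ ≠ 0})

theorem sum_cost_cuts_le_two_mul_regΔ (hp₀ : 0 < p) (hp₁ : p < 1) (hc1 : 0 < c1) (hc2 : 0 < c2)
    (hc3 : 0 < c3) (hΔ : ∀ τ, 0 ≤ Δ τ) (hb : StrictMono b) (hb0 : b 0 = s)
    (hbℓ : b ℓ = e + 1) (hℓ : 0 < ℓ)
    (hmax : ∀ i, i + 1 < ℓ →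
      rho p c1 c2 c3 ((b (i + 1) - b i + 1 : ℕ) : ℝ) < ∑ τ ∈ Ico (b i) (b (i + 1)), Δ τ) :
    ∑ i ∈ range ℓ, (c1 * ((b (i + 1) - b i : ℕ) : ℝ) ^ p + c2) ≤
      2 * regΔ p c1 c2 c3 ((e - s + 1 : ℕ) : ℝ) (∑ τ ∈ Ico s e, Δ τ) := by
  set m : ℕ → ℝ := fun i => ((b (i + 1) - b i : ℕ) : ℝ)
  have hm : ∀ i, 1 ≤ m i := fun i => by
    have := hb (lt_add_one i)
    exact Nat.one_le_cast.2 (by omega)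
  have hmN : ∑ i ∈ range ℓ, m i = ((e - s + 1 : ℕ) : ℝ) := by
    rw [← Nat.cast_sum, sum_range_tsub hb.monotone]
    congr 1
    have := hb hℓ
    omega
  have hD : ∑ i ∈ range (ℓ - 1), ∑ τ ∈ Ico (b i) (b (i + 1)), Δ τ ≤ ∑ τ ∈ Ico s e, Δ τ := by
    rw [sum_range_sum_Ico_eq _ hb.monotone]
    exact sum_le_sum_of_subset_of_nonneg (Ico_cuts_subset hb hb0 hbℓ hℓ) fun τ _ _ => hΔ τ
  have hW : ∑ i ∈ range (ℓ - 1), (m i + 1) ≤ 2 * ((e - s + 1 : ℕ) : ℝ) := by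
    calc ∑ i ∈ range (ℓ - 1), (m i + 1) ≤ ∑ i ∈ range (ℓ - 1), 2 * m i :=
          sum_le_sum fun i _ => by linarith [hm i]
      _ ≤ ∑ i ∈ range ℓ, 2 * m i := sum_le_sum_of_subset_of_nonneg
          (range_subset_range.2 (Nat.sub_le ℓ 1)) fun i _ _ => by linarith [hm i]
      _ = 2 * ((e - s + 1 : ℕ) : ℝ) := by rw [← mul_sum, hmN]
  obtain ⟨a, a', ha, ha', hcard, haD, ha'D⟩ := exists_card_split_of_rho_lt hc1 hc2.le hc3 hp₁
    (range (ℓ - 1)) (w := fun i => m i + 1) (fun i _ => by linarith [hm i])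
    (fun i _ => sum_nonneg fun τ _ => hΔ τ)
    (fun i hi => by simpa [m] using hmax i (by rw [mem_range] at hi; omega)) hD hW
  refine (sum_cost_cuts_le_regL hp₀ hp₁ hc1.le hb hb0 hbℓ hℓ).trans
    (regL_le_two_mul_regΔ hp₀.le hp₁ hc1 hc2.le hc3 (by positivity)
      (sum_nonneg fun τ _ => hΔ τ) (Nat.cast_nonneg _) ha ha' ?_ haD ha'D)
  rw [card_range, Nat.cast_sub hℓ, Nat.cast_one] at hcard
  linarith

end GreedyCuts

/-- There is a universal constant `K > 0` such that, with
`C(t) = min (c1 t^p + c2) (c3 t)` and `ρ(t) = C(t)/t`, every interval `J = [s,e]` admits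
a partition into consecutive intervals `I_1, …, I_ℓ` with `Δ_{I_i} ≤ ρ(|I_i|)` for each
`i` and `Σ_i (c1 |I_i|^p + c2) ≤ K · min(Reg_L(J), Reg_Δ(J))`, where
`Reg_L(J) = c1 L_J^{1-p} |J|^p + c2 L_J` and
`Reg_Δ(J) = (c1 Δ_J^{1-p} |J|)^{1/(2-p)} + c1 |J|^p + c1 (c3⁻¹ Δ_J)^{1-p} |J|^p
  + c2 (c1⁻¹ Δ_J |J|^{1-p})^{1/(2-p)} + c2 + c2 c3⁻¹ Δ_J`. -/
theorem stmt_11 : ∃ K : ℝ, 0 < K ∧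
    ∀ (p c1 c2 c3 : ℝ), 1 / 2 ≤ p → p < 1 → 0 < c1 → 0 < c2 → 0 < c3 →
    ∀ (Δ : ℕ → ℝ), (∀ τ, 0 ≤ Δ τ) →
    ∀ (s e : ℕ), 1 ≤ s → s ≤ e →
    ∃ (ℓ : ℕ) (st en : ℕ → ℕ), 1 ≤ ℓ ∧
      st 0 = s ∧ en (ℓ - 1) = e ∧
      (∀ i < ℓ, st i ≤ en i) ∧
      (∀ i, i + 1 < ℓ → st (i + 1) = en i + 1) ∧
      (∀ i < ℓ, ∑ τ ∈ Finset.Ico (st i) (en i), Δ τ ≤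
        (min (c1 * ((en i - st i + 1 : ℕ) : ℝ) ^ p + c2) (c3 * ((en i - st i + 1 : ℕ) : ℝ))) /
          ((en i - st i + 1 : ℕ) : ℝ)) ∧
      (∑ i ∈ Finset.range ℓ, (c1 * ((en i - st i + 1 : ℕ) : ℝ) ^ p + c2)) ≤
        K * min
          (c1 * ((1 + ((Finset.Ico s e).filter (fun τ => Δ τ ≠ 0)).card : ℕ) : ℝ) ^ (1 - p) *
              ((e - s + 1 : ℕ) : ℝ) ^ p +
            c2 * ((1 + ((Finset.Ico s e).filter (fun τ => Δ τ ≠ 0)).card : ℕ) : ℝ))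
          ((c1 * (∑ τ ∈ Finset.Ico s e, Δ τ) ^ (1 - p) * ((e - s + 1 : ℕ) : ℝ)) ^ (1 / (2 - p))
            + c1 * ((e - s + 1 : ℕ) : ℝ) ^ p
            + c1 * (c3⁻¹ * ∑ τ ∈ Finset.Ico s e, Δ τ) ^ (1 - p) * ((e - s + 1 : ℕ) : ℝ) ^ p
            + c2 * (c1⁻¹ * (∑ τ ∈ Finset.Ico s e, Δ τ) *
                ((e - s + 1 : ℕ) : ℝ) ^ (1 - p)) ^ (1 / (2 - p))
            + c2
            + c2 * c3⁻¹ * ∑ τ ∈ Finset.Ico s e, Δ τ) := by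
  refine ⟨2, two_pos, fun p c1 c2 c3 hp hp₁ hc1 hc2 hc3 Δ hΔ s e _ hse => ?_⟩
  obtain ⟨ℓ, b, hb, hb0, hbℓ, hfeas, hmax⟩ := exists_greedy_cuts
    (fun a n => ∑ τ ∈ Ico a (a + (n - 1)), Δ τ ≤ rho p c1 c2 c3 n)
    (fun a => by simpa using (rho_pos hc1.le hc2 hc3 one_pos).le) s (e + 1 - s)
  rw [Nat.add_sub_cancel' (by omega : s ≤ e + 1)] at hbℓ
  have hℓ : 0 < ℓ := Nat.pos_of_ne_zero fun h => by subst h; omega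
  have hlen : ∀ i, b (i + 1) - 1 - b i + 1 = b (i + 1) - b i := fun i => by
    have := hb (lt_add_one i); omega
  have hmax' : ∀ i, i + 1 < ℓ → rho p c1 c2 c3 ((b (i + 1) - b i + 1 : ℕ) : ℝ) <
      ∑ τ ∈ Ico (b i) (b (i + 1)), Δ τ := fun i hi => by
    simpa [Nat.add_sub_cancel' (hb (lt_add_one i)).le] using hmax i hi
  refine ⟨ℓ, b, fun i => b (i + 1) - 1, hℓ, hb0, by simp [Nat.sub_add_cancel hℓ, hbℓ],
    fun i _ => by dsimp only; have := hb (lt_add_one i); omega,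
    fun i _ => by dsimp only; have := hb (lt_add_one i); omega, fun i hi => ?_, ?_⟩
  · simp only [hlen]
    have := hfeas i hi
    rwa [show b i + (b (i + 1) - b i - 1) = b (i + 1) - 1 by
      have := hb (lt_add_one i); omega] at this
  · simp only [hlen]
    rw [mul_min_of_nonneg _ _ zero_le_two]
    exact le_min
      ((sum_cost_cuts_le_regL_card (by linarith) hp₁ hc1 hc2 hc3 hb hb0 hbℓ hℓ hmax').trans
        (le_mul_of_one_le_left (by unfold regL; positivity) one_le_two))
      (sum_cost_cuts_le_two_mul_regΔ (by linarith) hp₁ hc1 hc2 hc3 hΔ hb hb0 hbℓ hℓ hmax')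
end

section
/- Let d ≥ 1 and t ≥ 1 be integers. Let a_1, …, a_{t-1} ∈ ℝ^d satisfy ‖a_τ‖₂ ≤ 1 for all τ; let θ, θ_1, …, θ_{t-1} ∈ ℝ^d satisfy ‖θ‖₂ ≤ 1 and ‖θ_τ − θ‖₂ ≤ ε for all τ (where ε ≥ 0); let η_1, …, η_{t-1} ∈ ℝ; set Λ := I_d + Σ_{τ=1}^{t-1} a_τ a_τᵀ and θ̂ := Λ^{-1} Σ_{τ=1}^{t-1} (a_τᵀ θ_τ + η_τ)·a_τ. If √( (Σ_{τ=1}^{t-1} η_τ a_τ)ᵀ Λ^{-1} (Σ_{τ=1}^{t-1} η_τ a_τ) ) ≤ β for some β ≥ 0, then for every a ∈ ℝ^d: | aᵀ (θ̂ − θ) | ≤ ( β + 1 + ε·√(d·(t−1)) ) · √(aᵀ Λ^{-1} a). -/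
/-!
Since `Λ θ = θ + ∑ (a_τᵀ θ) a_τ`, the error `θ̂ - θ` equals `Λ⁻¹ w` with
`w = ∑ a_τᵀ(θ_τ - θ) a_τ + ∑ η_τ a_τ - θ`, so Cauchy–Schwarz for the inner product of `Λ⁻¹`
gives `|bᵀ(θ̂ - θ)| ≤ ‖b‖_{Λ⁻¹} ‖w‖_{Λ⁻¹}`. The three parts of `w` are bounded separately:
the noise by `β`, `θ` by `1` because `Λ⁻¹ ≤ I`, and the drift by the triangle inequality,
`|a_τᵀ(θ_τ - θ)| ≤ ε`, and Cauchy–Schwarz against the elliptical potential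
`∑ ‖a_τ‖²_{Λ⁻¹} = tr (Λ⁻¹ (Λ - I)) ≤ d`.
-/

open Matrix Finset

section QuadNorm

variable {n : Type*} [Fintype n] {P : Matrix n n ℝ}

noncomputable def quadNorm (P : Matrix n n ℝ) (x : n → ℝ) : ℝ := √(x ⬝ᵥ P *ᵥ x)

lemma quadNorm_eq_norm (hP : P.PosSemidef) (x : n → ℝ) :
    quadNorm P x = @Norm.norm _ (P.toSeminormedAddCommGroup hP).toNorm x := by
  change _ = √(RCLike.re ((P *ᵥ x) ⬝ᵥ star x))
  rw [quadNorm, star_trivial, RCLike.re_to_real, dotProduct_comm]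

lemma abs_dotProduct_mulVec_le (hP : P.PosSemidef) (x y : n → ℝ) :
    |x ⬝ᵥ P *ᵥ y| ≤ quadNorm P x * quadNorm P y := by
  let := P.toSeminormedAddCommGroup hP
  let := P.toInnerProductSpace hP
  rw [quadNorm_eq_norm hP, quadNorm_eq_norm hP]
  convert abs_real_inner_le_norm x y using 2
  change _ = (P *ᵥ y) ⬝ᵥ star x
  rw [star_trivial, dotProduct_comm]

lemma quadNorm_sub_le (hP : P.PosSemidef) (x y : n → ℝ) :
    quadNorm P (x - y) ≤ quadNorm P x + quadNorm P y := by
  simpa only [quadNorm_eq_norm hP] using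
    @norm_sub_le _ (P.toSeminormedAddCommGroup hP).toSeminormedAddGroup x y

lemma quadNorm_add_le (hP : P.PosSemidef) (x y : n → ℝ) :
    quadNorm P (x + y) ≤ quadNorm P x + quadNorm P y := by
  simpa only [quadNorm_eq_norm hP] using
    @norm_add_le _ (P.toSeminormedAddCommGroup hP).toSeminormedAddGroup x y

lemma quadNorm_sum_le {ι : Type*} (hP : P.PosSemidef) (s : Finset ι) (f : ι → n → ℝ) :
    quadNorm P (∑ i ∈ s, f i) ≤ ∑ i ∈ s, quadNorm P (f i) := by
  simpa only [quadNorm_eq_norm hP] using @norm_sum_le _ _ (P.toSeminormedAddCommGroup hP) s f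

lemma quadNorm_smul (c : ℝ) (x : n → ℝ) : quadNorm P (c • x) = |c| * quadNorm P x := by
  rw [quadNorm, quadNorm, mulVec_smul, dotProduct_smul, smul_dotProduct, smul_eq_mul,
    smul_eq_mul, ← mul_assoc, ← sq, Real.sqrt_mul (sq_nonneg c), Real.sqrt_sq_eq_abs]

lemma quadNorm_one [DecidableEq n] (x : n → ℝ) : quadNorm 1 x = √(∑ i, x i ^ 2) := by
  simp [quadNorm, dotProduct, sq]

lemma abs_dotProduct_le (x y : n → ℝ) :
    |x ⬝ᵥ y| ≤ √(∑ i, x i ^ 2) * √(∑ i, y i ^ 2) := by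
  classical
  simpa [quadNorm_one] using abs_dotProduct_mulVec_le PosSemidef.one x y

end QuadNorm

section RidgeGram

variable {n ι : Type*} [Fintype n] [DecidableEq n]

noncomputable def ridgeGram (s : Finset ι) (a : ι → n → ℝ) : Matrix n n ℝ :=
  1 + ∑ τ ∈ s, vecMulVec (a τ) (a τ)

variable (s : Finset ι) (a : ι → n → ℝ)

lemma posDef_ridgeGram : (ridgeGram s a).PosDef :=
  PosDef.one.add_posSemidef <| posSemidef_sum s fun τ _ => by
    simpa using posSemidef_vecMulVec_self_star (a τ)

lemma isUnit_det_ridgeGram : IsUnit (ridgeGram s a).det :=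
  (posDef_ridgeGram s a).isUnit.map detMonoidHom

lemma ridgeGram_mulVec (x : n → ℝ) :
    ridgeGram s a *ᵥ x = x + ∑ τ ∈ s, (a τ ⬝ᵥ x) • a τ := by
  simp only [ridgeGram, add_mulVec, one_mulVec, sum_mulVec, vecMulVec_mulVec, op_smul_eq_smul]

lemma dotProduct_ridgeGram_mulVec (x : n → ℝ) :
    x ⬝ᵥ ridgeGram s a *ᵥ x = x ⬝ᵥ x + ∑ τ ∈ s, (a τ ⬝ᵥ x) ^ 2 := by
  rw [ridgeGram_mulVec, dotProduct_add, dotProduct_sum]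
  congr 1
  refine sum_congr rfl fun τ _ => ?_
  rw [dotProduct_smul, smul_eq_mul, dotProduct_comm x, sq]

/-- With `y = Λ⁻¹ x`: `y ⬝ y ≤ y ⬝ Λ y = x ⬝ y`, and then `0 ≤ (x - y) ⬝ (x - y)` gives
`x ⬝ y ≤ x ⬝ x`. -/
lemma quadNorm_ridgeGram_inv_le (x : n → ℝ) :
    quadNorm (ridgeGram s a)⁻¹ x ≤ √(∑ i, x i ^ 2) := by
  set y := (ridgeGram s a)⁻¹ *ᵥ x
  have hy : ridgeGram s a *ᵥ y = x := by
    rw [mulVec_mulVec, mul_nonsing_inv _ (isUnit_det_ridgeGram s a), one_mulVec]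
  have hyy : y ⬝ᵥ y ≤ x ⬝ᵥ y := by
    rw [← hy, dotProduct_comm (ridgeGram s a *ᵥ y), dotProduct_ridgeGram_mulVec]
    exact le_add_of_nonneg_right (sum_nonneg fun τ _ => sq_nonneg _)
  have hxy : 0 ≤ (x - y) ⬝ᵥ (x - y) := Fintype.sum_nonneg fun _ => mul_self_nonneg _
  rw [sub_dotProduct, dotProduct_sub, dotProduct_sub, dotProduct_comm y x] at hxy
  rw [← quadNorm_one]
  exact Real.sqrt_le_sqrt (by simp only [one_mulVec]; linarith)

lemma sum_dotProduct_ridgeGram_inv_mulVec_le :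
    ∑ τ ∈ s, a τ ⬝ᵥ (ridgeGram s a)⁻¹ *ᵥ a τ ≤ Fintype.card n := by
  set Λ := ridgeGram s a
  have htrace : ∑ τ ∈ s, a τ ⬝ᵥ Λ⁻¹ *ᵥ a τ = trace (Λ⁻¹ * (Λ - 1)) := by
    rw [show Λ - 1 = ∑ τ ∈ s, vecMulVec (a τ) (a τ) from add_sub_cancel_left _ _, mul_sum,
      trace_sum]
    refine sum_congr rfl fun τ _ => ?_
    rw [mul_vecMulVec, trace_vecMulVec, dotProduct_comm]
  rw [htrace, mul_sub, nonsing_inv_mul _ (isUnit_det_ridgeGram s a), mul_one, trace_sub,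
    trace_one]
  exact sub_le_self _ (posDef_ridgeGram s a).inv.posSemidef.trace_nonneg

lemma sum_quadNorm_ridgeGram_inv_le :
    ∑ τ ∈ s, quadNorm (ridgeGram s a)⁻¹ (a τ) ≤ √(Fintype.card n * #s) := by
  have hP := (posDef_ridgeGram s a).inv.posSemidef
  calc ∑ τ ∈ s, quadNorm (ridgeGram s a)⁻¹ (a τ)
      = ∑ τ ∈ s, √1 * √(a τ ⬝ᵥ (ridgeGram s a)⁻¹ *ᵥ a τ) := by simp [quadNorm]
    _ ≤ √(∑ τ ∈ s, 1) * √(∑ τ ∈ s, a τ ⬝ᵥ (ridgeGram s a)⁻¹ *ᵥ a τ) :=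
        Real.sum_sqrt_mul_sqrt_le s (fun _ => zero_le_one) fun τ => by
          simpa using hP.dotProduct_mulVec_nonneg (a τ)
    _ ≤ √(#s : ℝ) * √(Fintype.card n : ℝ) := by
        gcongr
        · simp
        · exact sum_dotProduct_ridgeGram_inv_mulVec_le s a
    _ = √(Fintype.card n * #s) := by rw [← Real.sqrt_mul (Nat.cast_nonneg _), mul_comm]

lemma quadNorm_ridgeGram_inv_sum_smul_le {c : ι → ℝ} {ε : ℝ} (hε : 0 ≤ ε)
    (hc : ∀ τ ∈ s, |c τ| ≤ ε) :
    quadNorm (ridgeGram s a)⁻¹ (∑ τ ∈ s, c τ • a τ) ≤ ε * √(Fintype.card n * #s) :=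
  calc quadNorm (ridgeGram s a)⁻¹ (∑ τ ∈ s, c τ • a τ)
      ≤ ∑ τ ∈ s, |c τ| * quadNorm (ridgeGram s a)⁻¹ (a τ) := by
        simpa only [quadNorm_smul] using
          quadNorm_sum_le (posDef_ridgeGram s a).inv.posSemidef s fun τ => c τ • a τ
    _ ≤ ∑ τ ∈ s, ε * quadNorm (ridgeGram s a)⁻¹ (a τ) :=
        sum_le_sum fun τ hτ => mul_le_mul_of_nonneg_right (hc τ hτ) (Real.sqrt_nonneg _)
    _ ≤ ε * √(Fintype.card n * #s) := by
        rw [← mul_sum]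
        exact mul_le_mul_of_nonneg_left (sum_quadNorm_ridgeGram_inv_le s a) hε

lemma ridgeGram_inv_mulVec_sub (θ : n → ℝ) (θs : ι → n → ℝ) (η : ι → ℝ) :
    (ridgeGram s a)⁻¹ *ᵥ (∑ τ ∈ s, (a τ ⬝ᵥ θs τ + η τ) • a τ) - θ =
      (ridgeGram s a)⁻¹ *ᵥ
        (∑ τ ∈ s, (a τ ⬝ᵥ (θs τ - θ)) • a τ + ∑ τ ∈ s, η τ • a τ - θ) := by
  have hsplit : ∑ τ ∈ s, (a τ ⬝ᵥ θs τ + η τ) • a τ =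
      (∑ τ ∈ s, (a τ ⬝ᵥ (θs τ - θ)) • a τ + ∑ τ ∈ s, η τ • a τ - θ) + ridgeGram s a *ᵥ θ := by
    simp only [ridgeGram_mulVec, dotProduct_sub, sub_smul, add_smul, sum_add_distrib,
      sum_sub_distrib]
    abel
  rw [hsplit, mulVec_add, mulVec_mulVec, nonsing_inv_mul _ (isUnit_det_ridgeGram s a),
    one_mulVec, add_sub_cancel_right]

end RidgeGram

theorem stmt_12_general (d t : ℕ) (ht : 1 ≤ t)
    (a : ℕ → Fin d → ℝ)
    (ha : ∀ τ ∈ Finset.Icc 1 (t - 1), Real.sqrt (∑ i, a τ i ^ 2) ≤ 1)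
    (θ : Fin d → ℝ) (hθ : Real.sqrt (∑ i, θ i ^ 2) ≤ 1)
    (θdrift : ℕ → Fin d → ℝ) (ε : ℝ) (hε : 0 ≤ ε)
    (hdrift : ∀ τ ∈ Finset.Icc 1 (t - 1),
      Real.sqrt (∑ i, (θdrift τ i - θ i) ^ 2) ≤ ε)
    (η : ℕ → ℝ)
    (Λ : Matrix (Fin d) (Fin d) ℝ)
    (hΛ : Λ = 1 + ∑ τ ∈ Finset.Icc 1 (t - 1), Matrix.vecMulVec (a τ) (a τ))
    (θhat : Fin d → ℝ)
    (hθhat : θhat =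
      Λ⁻¹.mulVec (∑ τ ∈ Finset.Icc 1 (t - 1), (a τ ⬝ᵥ θdrift τ + η τ) • a τ))
    (β : ℝ)
    (hβ : Real.sqrt ((∑ τ ∈ Finset.Icc 1 (t - 1), η τ • a τ) ⬝ᵥ
        Λ⁻¹.mulVec (∑ τ ∈ Finset.Icc 1 (t - 1), η τ • a τ)) ≤ β)
    (b : Fin d → ℝ) :
    |b ⬝ᵥ (θhat - θ)| ≤
      (β + 1 + ε * Real.sqrt ((d : ℝ) * ((t : ℝ) - 1))) *
        Real.sqrt (b ⬝ᵥ Λ⁻¹.mulVec b) := by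
  set s := Finset.Icc 1 (t - 1)
  obtain rfl : Λ = ridgeGram s a := hΛ
  subst hθhat
  have hP := (posDef_ridgeGram s a).inv.posSemidef
  rw [ridgeGram_inv_mulVec_sub, mul_comm]
  set drift := ∑ τ ∈ s, (a τ ⬝ᵥ (θdrift τ - θ)) • a τ
  set noise := ∑ τ ∈ s, η τ • a τ
  have hcard : (Fintype.card (Fin d) * #s : ℝ) = d * ((t : ℝ) - 1) := by
    simp [s, Nat.cast_sub ht]
  have hdrift_term : quadNorm (ridgeGram s a)⁻¹ drift ≤ ε * √(d * ((t : ℝ) - 1)) :=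
    hcard ▸ quadNorm_ridgeGram_inv_sum_smul_le s a hε fun τ hτ =>
      (abs_dotProduct_le _ _).trans <| by
        simpa using mul_le_mul (ha τ hτ) (hdrift τ hτ) (Real.sqrt_nonneg _) zero_le_one
  have hnoise_term : quadNorm (ridgeGram s a)⁻¹ noise ≤ β := hβ
  have hθ_term : quadNorm (ridgeGram s a)⁻¹ θ ≤ 1 := (quadNorm_ridgeGram_inv_le s a θ).trans hθ
  refine (abs_dotProduct_mulVec_le hP b _).trans <|
    mul_le_mul_of_nonneg_left ?_ (Real.sqrt_nonneg _)
  linarith [quadNorm_sub_le hP (drift + noise) θ, quadNorm_add_le hP drift noise]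

/-- Deterministic estimation-error bound for ridge regression under
parameter drift.  With `Λ = I_d + Σ_τ a_τ a_τᵀ` (vectors of norm at most `1`),
`θ̂ = Λ⁻¹ Σ_τ (a_τᵀ θ_τ + η_τ) a_τ`, `‖θ‖₂ ≤ 1`, `‖θ_τ - θ‖₂ ≤ ε`, and
`‖Σ_τ η_τ a_τ‖_{Λ⁻¹} ≤ β`, one has for every `b`:
`|bᵀ(θ̂ - θ)| ≤ (β + 1 + ε √(d(t-1))) √(bᵀ Λ⁻¹ b)`. -/
theorem stmt_12 (d t : ℕ) (hd : 1 ≤ d) (ht : 1 ≤ t)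
    (a : ℕ → Fin d → ℝ)
    (ha : ∀ τ ∈ Finset.Icc 1 (t - 1), Real.sqrt (∑ i, a τ i ^ 2) ≤ 1)
    (θ : Fin d → ℝ) (hθ : Real.sqrt (∑ i, θ i ^ 2) ≤ 1)
    (θdrift : ℕ → Fin d → ℝ) (ε : ℝ) (hε : 0 ≤ ε)
    (hdrift : ∀ τ ∈ Finset.Icc 1 (t - 1),
      Real.sqrt (∑ i, (θdrift τ i - θ i) ^ 2) ≤ ε)
    (η : ℕ → ℝ)
    (Λ : Matrix (Fin d) (Fin d) ℝ)
    (hΛ : Λ = 1 + ∑ τ ∈ Finset.Icc 1 (t - 1), Matrix.vecMulVec (a τ) (a τ))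
    (θhat : Fin d → ℝ)
    (hθhat : θhat =
      Λ⁻¹.mulVec (∑ τ ∈ Finset.Icc 1 (t - 1), (a τ ⬝ᵥ θdrift τ + η τ) • a τ))
    (β : ℝ) (hβ0 : 0 ≤ β)
    (hβ : Real.sqrt ((∑ τ ∈ Finset.Icc 1 (t - 1), η τ • a τ) ⬝ᵥ
        Λ⁻¹.mulVec (∑ τ ∈ Finset.Icc 1 (t - 1), η τ • a τ)) ≤ β)
    (b : Fin d → ℝ) :
    |b ⬝ᵥ (θhat - θ)| ≤
      (β + 1 + ε * Real.sqrt ((d : ℝ) * ((t : ℝ) - 1))) *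
        Real.sqrt (b ⬝ᵥ Λ⁻¹.mulVec b) :=
  stmt_12_general d t ht a ha θ hθ θdrift ε hε hdrift η Λ hΛ θhat hθhat β hβ b
end
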